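/- arXiv:2404.06583 — 2 statements merged into one kernel-verified Lean document; each statement's English description precedes it below -/
import Mathlib

section
/- Let p ∈ [1,2) and r > 0, and let B(r) ⊂ C_1 be the set of unparameterised (tree-like equivalence classes of) bounded variation paths whose tree-reduced length is at most r. Then B(r) is a compact subspace of the space of unparameterised paths C_p equipped with the product topology χ_pr. Consequently (C_1, χ_pr) = ∪_{r=1}^∞ B(r) is σ-compact. -/
noncomputable section

open Filter Topology MeasureTheory

/-- Model of a finite-dimensional real inner product space of dimension `d`. -/
abbrev Vec (d : ℕ) : Type := EuclideanSpace ℝ (Fin d)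

/-- The `k`-th tensor power `V^{⊗k}` of `Vec d` with its Hilbert–Schmidt inner product,
realised in coordinates indexed by words of length `k` over the alphabet `Fin d`. -/
abbrev TLevel (d k : ℕ) : Type := EuclideanSpace ℝ (Fin k → Fin d)

/-- The extended tensor algebra `T((V)) = ∏_{k ≥ 0} V^{⊗k}`. -/
abbrev TSeq (d : ℕ) : Type := ∀ k : ℕ, TLevel d k

/-- Riemann–Stieltjes sum of `∫ f dg` over `[a,b]` along the uniform partition with `n` pieces. -/
def rsSum (f g : ℝ → ℝ) (a b : ℝ) (n : ℕ) : ℝ :=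
  ∑ i ∈ Finset.range n,
    f (a + i * (b - a) / n) *
      (g (a + (i + 1) * (b - a) / n) - g (a + i * (b - a) / n))

/-- The (Young / Riemann–Stieltjes) integral `∫_a^b f dg`, defined as the limit of
Riemann–Stieltjes sums along uniform partitions (junk value if no limit exists). -/
def rsInt (f g : ℝ → ℝ) (a b : ℝ) : ℝ :=
  limUnder atTop (rsSum f g a b)

/-- Iterated (Young) integral coordinate of a path, with the word given in *reverse*
order, so that `sigWord x a (i :: w) t = ∫_a^t (sigWord x a w u) d(x^i_u)`. -/
def sigWord {d : ℕ} (x : ℝ → Vec d) (a : ℝ) : List (Fin d) → ℝ → ℝ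
  | [], _ => 1
  | i :: w, t => rsInt (fun u => sigWord x a w u) (fun u => x u i) a t

/-- The `k`-th signature level `S(x)^{(k)}_{[a,b]} ∈ V^{⊗k}`, in coordinates. -/
def sigLevel {d : ℕ} (x : ℝ → Vec d) (a b : ℝ) (k : ℕ) : TLevel d k :=
  WithLp.toLp 2 (fun idx => sigWord x a (List.ofFn idx).reverse b)

/-- The signature transform `S(x)_{[a,b]} ∈ T((V))`. -/
def signatureT {d : ℕ} (x : ℝ → Vec d) (a b : ℝ) : TSeq d :=
  fun k => sigLevel x a b k

/-- The set of sums `Σ_i ‖x_{t_{i+1}} − x_{t_i}‖^p` over partitions `a = t_0 ≤ … ≤ t_n = b`. -/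
def varSums {E : Type*} [NormedAddCommGroup E] (x : ℝ → E) (p a b : ℝ) : Set ℝ :=
  { s | ∃ (n : ℕ) (t : ℕ → ℝ), Monotone t ∧ t 0 = a ∧ t n = b ∧
      s = ∑ i ∈ Finset.range n, ‖x (t (i + 1)) - x (t i)‖ ^ p }

/-- `x ∈ C_p([a,b], E)` : continuous with finite `p`-variation on `[a,b]`. -/
def MemCp {E : Type*} [NormedAddCommGroup E] (x : ℝ → E) (p a b : ℝ) : Prop :=
  ContinuousOn x (Set.Icc a b) ∧ BddAbove (varSums x p a b)

/-- The `p`-variation norm `‖x‖_{p,[a,b]}`. -/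
def pvar {E : Type*} [NormedAddCommGroup E] (x : ℝ → E) (p a b : ℝ) : ℝ :=
  sSup (varSums x p a b) ^ (1 / p)

/-- The product of the extended tensor algebra `T((V))`:
`(v · w)_k = Σ_{l=0}^{k} v_l ⊗ w_{k-l}`, in coordinates. -/
def seqMul {d : ℕ} (v w : TSeq d) : TSeq d :=
  fun k => WithLp.toLp 2 (fun idx =>
    ∑ l : Fin (k + 1),
      v l.1 (fun i => idx ⟨i.1, lt_of_lt_of_le i.2 (Nat.lt_succ_iff.mp l.2)⟩) *
        w (k - l.1) (fun j => idx ⟨l.1 + j.1, by have hj := j.2; omega⟩))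

/-- The unit `1 = (1,0,0,…)` of `T((V))`. -/
def seqOne (d : ℕ) : TSeq d :=
  fun k => if k = 0 then WithLp.toLp 2 (fun _ => (1 : ℝ)) else 0

/-- Truncation (canonical projection) `π_N : T((V)) → T_N(V)`. -/
def truncTS {d : ℕ} (N : ℕ) (v : TSeq d) : TSeq d :=
  fun k => if k ≤ N then v k else 0

/-- Tensor polynomials: elements of `T(V) = ⊕_k V^{⊗k}` inside `T((V))`. -/
def FinSuppTS {d : ℕ} (f : TSeq d) : Prop := ∃ N, ∀ k, N < k → f k = 0

/-- Pairing of a tensor polynomial over the dual with an element of `T((V))`,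
using the canonical (Hilbert–Schmidt) identification `(V^{⊗k})* ≅ (V*)^{⊗k}`. -/
def pairTS {d : ℕ} (f v : TSeq d) : ℝ :=
  ∑' k, @inner ℝ _ _ (f k) (v k)

/-- The shuffle product on `T(V*)`, in coordinates:
`(f ⧢ g)_n(w) = Σ_{A ⊆ {1,…,n}} f_{|A|}(w|_A) · g_{n−|A|}(w|_{Aᶜ})`. -/
def shuffleTS {d : ℕ} (f g : TSeq d) : TSeq d :=
  fun n => WithLp.toLp 2 (fun idx =>
    ∑ A : Finset (Fin n),
      f A.card (fun i => idx (A.orderIsoOfFin rfl i).1) *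
        g (n - A.card) (fun j =>
          idx ((Aᶜ).orderIsoOfFin (by simp [Finset.card_compl]) j).1))

/-- Concatenation `x * y` of paths, where `x` lives on `[a,b]` and `y` on `[b,c]`. -/
def concatP {d : ℕ} (x y : ℝ → Vec d) (b : ℝ) : ℝ → Vec d :=
  fun t => if t ≤ b then x t else y t - y b + x b

/-- Signatures over a fixed interval `[a,b]` of paths in `C_p([a,b],V)`. -/
def SigSet (d : ℕ) (p a b : ℝ) : Set (TSeq d) :=
  { s | ∃ x : ℝ → Vec d, MemCp x p a b ∧ s = signatureT x a b }

/-- `S_p`: the image of `C_p(V)` under the signature transform. -/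
def SigSetAll (d : ℕ) (p : ℝ) : Set (TSeq d) :=
  { s | ∃ (a b : ℝ) (x : ℝ → Vec d), a ≤ b ∧ MemCp x p a b ∧ s = signatureT x a b }

/-- The truncated tensor algebra `T_N(V) = ⊕_{k=0}^N V^{⊗k}` as a submodule of `T((V))`. -/
def truncSubmodule (d N : ℕ) : Submodule ℝ (TSeq d) where
  carrier := { v | ∀ k, N < k → v k = 0 }
  add_mem' := fun {u v} hu hv k hk => by
    show u k + v k = 0
    rw [hu k hk, hv k hk, add_zero]
  zero_mem' := fun k _ => rfl
  smul_mem' := fun c {v} hv k hk => by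
    show c • v k = 0
    rw [hv k hk, smul_zero]

/-- Paths in `C_p([a,b],V)` started at the origin. -/
def PathsFrom0 (d : ℕ) (p a b : ℝ) : Type := {x : ℝ → Vec d // MemCp x p a b ∧ x a = 0}

/-- Tree-like equivalence: two paths are equivalent iff their signatures agree. -/
def sigSetoid (d : ℕ) (p a b : ℝ) : Setoid (PathsFrom0 d p a b) where
  r x y := signatureT x.1 a b = signatureT y.1 a b
  iseqv := ⟨fun _ => rfl, Eq.symm, Eq.trans⟩

/-- The space `𝒞_p` of unparameterised paths. -/
def UPath (d : ℕ) (p a b : ℝ) : Type := Quotient (sigSetoid d p a b)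

/-- The signature transform on unparameterised paths. -/
def sigQ (d : ℕ) (p a b : ℝ) : UPath d p a b → TSeq d :=
  Quotient.lift (fun x => signatureT x.1 a b) (fun _ _ h => h)

/-- The product topology `χ_pr` on `𝒞_p`: the topology induced by the signature
transform from the product topology on `T((V)) = ∏_k V^{⊗k}`. -/
def prodTop (d : ℕ) (p a b : ℝ) : TopologicalSpace (UPath d p a b) :=
  TopologicalSpace.induced (sigQ d p a b) inferInstance

/-- The tree-reduced length of an unparameterised path: the infimum of the `1`-variation
over the bounded-variation representatives of the class. -/
def treeLength (d : ℕ) (p a b : ℝ) (q : UPath d p a b) : ℝ :=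
  sInf { L | ∃ x : PathsFrom0 d p a b,
    Quotient.mk (sigSetoid d p a b) x = q ∧ MemCp x.1 1 a b ∧ L = pvar x.1 1 a b }

/-- `B(r)`: unparameterised paths possessing a bounded-variation representative and
whose tree-reduced length is at most `r`. -/
def ballB (d : ℕ) (p a b r : ℝ) : Set (UPath d p a b) :=
  { q | (∃ x : PathsFrom0 d p a b,
      Quotient.mk (sigSetoid d p a b) x = q ∧ MemCp x.1 1 a b) ∧ treeLength d p a b q ≤ r }

/-- The `φ`-inner product `⟨u,v⟩_φ = Σ_k φ(k) ⟨u_k, v_k⟩` on tensor sequences. -/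
def kTS (d : ℕ) (φ : ℕ → ℝ) (u v : TSeq d) : ℝ :=
  ∑' k, φ k * @inner ℝ _ _ (u k) (v k)

/-- The `φ`-signature kernel on unparameterised paths. -/
def kQ (d : ℕ) (p a b : ℝ) (φ : ℕ → ℝ) (q q' : UPath d p a b) : ℝ :=
  kTS d φ (sigQ d p a b q) (sigQ d p a b q')

/-- The two-parameter `φ`-signature kernel `k_φ(x,y)_{s,t}` of two paths. -/
def kPath (d : ℕ) (φ : ℕ → ℝ) (x y : ℝ → Vec d) (a c s t : ℝ) : ℝ :=
  ∑' k, φ k * @inner ℝ _ _ (sigLevel x a s k) (sigLevel y c t k)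

/-- Double Riemann–Stieltjes sum approximating `∫_a^s ∫_c^t F(u,v) ⟨dx_u, dy_v⟩`. -/
def rsSum2 {d : ℕ} (F : ℝ → ℝ → ℝ) (x y : ℝ → Vec d) (a s c t : ℝ) (n : ℕ) : ℝ :=
  ∑ i ∈ Finset.range n, ∑ j ∈ Finset.range n,
    F (a + i * (s - a) / n) (c + j * (t - c) / n) *
      @inner ℝ _ _
        (x (a + (i + 1) * (s - a) / n) - x (a + i * (s - a) / n))
        (y (c + (j + 1) * (t - c) / n) - y (c + j * (t - c) / n))

/-- The element `i₁(v) ∈ T((V))` concentrated in tensor degree one. -/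
def unitVec {d : ℕ} (v : Vec d) : TSeq d :=
  fun k =>
    match k with
    | 1 => WithLp.toLp 2 (fun idx => v (idx 0))
    | _ => 0

/-- `E`-valued Riemann–Stieltjes sums for the controlled integral `∫_a^t Y_u · dx_u`,
where `m : E → V → E` implements right multiplication by degree-one tensors. -/
def rsSumE {d : ℕ} {E : Type*} [NormedAddCommGroup E]
    (m : E → Vec d → E) (Y : ℝ → E) (x : ℝ → Vec d) (a t : ℝ) (n : ℕ) : E :=
  ∑ i ∈ Finset.range n,
    m (Y (a + i * (t - a) / n))
      (x (a + (i + 1) * (t - a) / n) - x (a + i * (t - a) / n))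

/-!
Every class in `B(r)` has, for each `r' > r`, a representative of length `< r'`; run at
constant speed over `[a, b]` (Mathlib's natural parametrisation), it becomes an
`r' / (b - a)`-Lipschitz path with the same signature, because iterated Riemann–Stieltjes
integrals are invariant under continuous monotone time changes. By Arzelà–Ascoli these Lipschitz
paths form a compact set for uniform convergence, on which the signature is continuous: along
uniformly Lipschitz paths each iterated integral depends continuously on the path, uniformly in
time. So the image of `B(r)` under the injective signature map, which induces `χ_pr`, is an
intersection of compact sets. Every class of `C_1` has finite length, whence
`C_1 = ⋃ₙ B(n + 1)`.

For a Lipschitz integrand and integrator, Riemann–Stieltjes sums along two partitions of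
`[a, c]` with meshes `δ, δ'` differ by at most `L * (δ + δ') * (M * (c - a))`; existence,
additivity, invariance under reparametrisation and stability of the integral all follow from
this estimate.
-/

open Set Filter Topology
open scoped NNReal

section RiemannStieltjes

variable {F G : ℝ → ℝ} {a c : ℝ} {L M : ℝ≥0}

def stieltjesSum (F G : ℝ → ℝ) (p : ℕ → ℝ) (n : ℕ) : ℝ :=
  ∑ i ∈ Finset.range n, F (p i) * (G (p (i + 1)) - G (p i))

def IsPartition (p : ℕ → ℝ) (n : ℕ) (a c : ℝ) : Prop :=
  Monotone p ∧ p 0 = a ∧ p n = c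

def HasMeshLE (p : ℕ → ℝ) (n : ℕ) (δ : ℝ) : Prop :=
  ∀ i < n, p (i + 1) - p i ≤ δ

theorem IsPartition.mem_Icc {p : ℕ → ℝ} {n : ℕ} (hp : IsPartition p n a c) {i : ℕ}
    (hi : i ≤ n) : p i ∈ Icc a c :=
  ⟨hp.2.1 ▸ hp.1 i.zero_le, hp.2.2 ▸ hp.1 hi⟩

theorem IsPartition.le {p : ℕ → ℝ} {n : ℕ} (hp : IsPartition p n a c) : a ≤ c :=
  (hp.mem_Icc le_rfl).1.trans (hp.mem_Icc le_rfl).2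

theorem stieltjesSum_congr {F' G' : ℝ → ℝ} {p : ℕ → ℝ} {n : ℕ} (hp : IsPartition p n a c)
    (hF : EqOn F F' (Icc a c)) (hG : EqOn G G' (Icc a c)) :
    stieltjesSum F G p n = stieltjesSum F' G' p n :=
  Finset.sum_congr rfl fun i hi => by
    have hi := Finset.mem_range.1 hi
    rw [hF (hp.mem_Icc hi.le), hG (hp.mem_Icc hi.le), hG (hp.mem_Icc hi)]

theorem abs_stieltjesSum_le {p : ℕ → ℝ} {n : ℕ} {C : ℝ} (hp : IsPartition p n a c)
    (hG : LipschitzOnWith M G (Icc a c)) (hC : ∀ t ∈ Icc a c, |F t| ≤ C) :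
    |stieltjesSum F G p n| ≤ C * (M * (c - a)) := by
  calc |stieltjesSum F G p n|
      ≤ ∑ i ∈ Finset.range n, C * (M * (p (i + 1) - p i)) := by
        refine (Finset.abs_sum_le_sum_abs _ _).trans (Finset.sum_le_sum fun i hi => ?_)
        have hi := Finset.mem_range.1 hi
        have hGi := hG.dist_le_mul _ (hp.mem_Icc hi) _ (hp.mem_Icc hi.le)
        rw [Real.dist_eq, Real.dist_eq, abs_of_nonneg (sub_nonneg.2 (hp.1 i.le_succ))] at hGi
        rw [abs_mul]
        exact mul_le_mul (hC _ (hp.mem_Icc hi.le)) hGi (abs_nonneg _)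
          ((abs_nonneg _).trans (hC _ (hp.mem_Icc hi.le)))
    _ = C * (M * (c - a)) := by
        rw [← Finset.mul_sum, ← Finset.mul_sum, Finset.sum_range_sub (fun i => p i), hp.2.1,
          hp.2.2]

/-- The increment of `G` over `[s, t] ∩ [s', t']`, zero when the intersection is empty. -/
def overlapIncr (G : ℝ → ℝ) (s t s' t' : ℝ) : ℝ :=
  G (min t t') - G (min (max s s') (min t t'))

theorem overlapIncr_comm (G : ℝ → ℝ) (s t s' t' : ℝ) :
    overlapIncr G s t s' t' = overlapIncr G s' t' s t := by
  simp only [overlapIncr, min_comm t t', max_comm s s']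

theorem overlapIncr_eq_sub (G : ℝ → ℝ) {s t u u' : ℝ} (hst : s ≤ t) (hu : u ≤ u') :
    overlapIncr G s t u u' = G (min (max s u') t) - G (min (max s u) t) := by
  unfold overlapIncr
  grind

theorem sum_overlapIncr (G : ℝ → ℝ) {q : ℕ → ℝ} {n : ℕ} (hq : IsPartition q n a c) {s t : ℝ}
    (hs : a ≤ s) (hst : s ≤ t) (ht : t ≤ c) :
    ∑ j ∈ Finset.range n, overlapIncr G s t (q j) (q (j + 1)) = G t - G s := by
  rw [Finset.sum_congr rfl fun j _ => overlapIncr_eq_sub G hst (hq.1 j.le_succ),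
    Finset.sum_range_sub (fun j => G (min (max s (q j)) t)), hq.2.1, hq.2.2,
    max_eq_right (hst.trans ht), min_eq_right ht, max_eq_left hs, min_eq_left hst]

theorem overlapIncr_eq_zero {G : ℝ → ℝ} {s t s' t' : ℝ} (hst : s ≤ t) (hst' : s' ≤ t')
    (h : t' ≤ s ∨ t ≤ s') : overlapIncr G s t s' t' = 0 := by
  unfold overlapIncr
  rcases h with h | h
  · rw [min_eq_right (h.trans hst), max_eq_left (hst'.trans h), min_eq_right h, sub_self]
  · rw [min_eq_left (h.trans hst'), min_eq_right (h.trans (le_max_right _ _)), sub_self]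

theorem abs_overlapIncr_le (hG : LipschitzOnWith M G (Icc a c)) {s t s' t' : ℝ}
    (hs : s ∈ Icc a c) (ht : t ∈ Icc a c) (ht' : t' ∈ Icc a c) :
    |overlapIncr G s t s' t'| ≤ M * overlapIncr id s t s' t' := by
  have hhi : min t t' ∈ Icc a c := ⟨le_min ht.1 ht'.1, (min_le_left _ _).trans ht.2⟩
  have hlo : min (max s s') (min t t') ∈ Icc a c :=
    ⟨le_min (hs.1.trans (le_max_left _ _)) hhi.1, (min_le_right _ _).trans hhi.2⟩
  have h := hG.dist_le_mul _ hhi _ hlo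
  rwa [Real.dist_eq, Real.dist_eq,
    abs_of_nonneg (sub_nonneg.2 (min_le_right (max s s') _))] at h

theorem stieltjesSum_eq_sum_overlapIncr {p q : ℕ → ℝ} {m n : ℕ} (hp : IsPartition p m a c)
    (hq : IsPartition q n a c) :
    stieltjesSum F G p m = ∑ i ∈ Finset.range m, ∑ j ∈ Finset.range n,
      F (p i) * overlapIncr G (p i) (p (i + 1)) (q j) (q (j + 1)) := by
  refine Finset.sum_congr rfl fun i hi => ?_
  have hi := Finset.mem_range.1 hi
  rw [← Finset.mul_sum, sum_overlapIncr G hq (hp.mem_Icc hi.le).1 (hp.1 i.le_succ)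
    (hp.mem_Icc hi).2]

theorem abs_sub_mul_overlapIncr_le (hF : LipschitzOnWith L F (Icc a c))
    (hG : LipschitzOnWith M G (Icc a c)) {s t s' t' δ δ' : ℝ} (hs : s ∈ Icc a c)
    (ht : t ∈ Icc a c) (hs' : s' ∈ Icc a c) (ht' : t' ∈ Icc a c) (hδ : t - s ≤ δ)
    (hδ' : t' - s' ≤ δ') (hst : s ≤ t) (hst' : s' ≤ t') :
    |(F s - F s') * overlapIncr G s t s' t'| ≤ L * (δ + δ') * (M * overlapIncr id s t s' t') := by
  rw [abs_mul]
  by_cases hdisj : t' ≤ s ∨ t ≤ s'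
  · simp [overlapIncr_eq_zero hst hst' hdisj]
  simp only [not_or, not_le] at hdisj
  have hdist : |s - s'| ≤ δ + δ' := by
    rw [abs_le]; constructor <;> linarith
  have hF' := hF.dist_le_mul _ hs _ hs'
  rw [Real.dist_eq, Real.dist_eq] at hF'
  exact mul_le_mul (hF'.trans (mul_le_mul_of_nonneg_left hdist L.2))
    (abs_overlapIncr_le hG hs ht ht') (abs_nonneg _) (mul_nonneg L.2 ((abs_nonneg _).trans hdist))

/-- Both sums are rewritten over the common refinement of the two partitions, whose cells are
the overlaps `[p i, p (i + 1)] ∩ [q j, q (j + 1)]`. -/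
theorem abs_stieltjesSum_sub_stieltjesSum_le (hF : LipschitzOnWith L F (Icc a c))
    (hG : LipschitzOnWith M G (Icc a c)) {p q : ℕ → ℝ} {m n : ℕ} {δ δ' : ℝ}
    (hp : IsPartition p m a c) (hq : IsPartition q n a c) (hpδ : HasMeshLE p m δ)
    (hqδ : HasMeshLE q n δ') :
    |stieltjesSum F G p m - stieltjesSum F G q n| ≤ L * (δ + δ') * (M * (c - a)) := by
  have htotal : stieltjesSum (fun _ => 1) id p m = c - a := by
    simp only [stieltjesSum, one_mul, id]
    rw [Finset.sum_range_sub p, hp.2.1, hp.2.2]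
  rw [stieltjesSum_eq_sum_overlapIncr hp hq, stieltjesSum_eq_sum_overlapIncr hq hp,
    Finset.sum_comm (s := Finset.range n), ← Finset.sum_sub_distrib, ← htotal,
    stieltjesSum_eq_sum_overlapIncr hp hq, Finset.mul_sum, Finset.mul_sum]
  refine (Finset.abs_sum_le_sum_abs _ _).trans (Finset.sum_le_sum fun i hi => ?_)
  rw [← Finset.sum_sub_distrib, Finset.mul_sum, Finset.mul_sum]
  refine (Finset.abs_sum_le_sum_abs _ _).trans (Finset.sum_le_sum fun j hj => ?_)
  have hi := Finset.mem_range.1 hi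
  have hj := Finset.mem_range.1 hj
  rw [overlapIncr_comm G (q j), ← sub_mul, one_mul]
  exact abs_sub_mul_overlapIncr_le hF hG (hp.mem_Icc hi.le) (hp.mem_Icc hi) (hq.mem_Icc hj.le)
    (hq.mem_Icc hj) (hpδ i hi) (hqδ j hj) (hp.1 i.le_succ) (hq.1 j.le_succ)

/-- Frozen at `c` after index `n`, so that it is monotone on all of `ℕ`. -/
def unifPart (a c : ℝ) (n i : ℕ) : ℝ :=
  a + (min i n : ℕ) * (c - a) / n

theorem unifPart_mem_Icc (hac : a ≤ c) (n i : ℕ) : unifPart a c n i ∈ Icc a c := by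
  rcases n.eq_zero_or_pos with rfl | hn
  · simp [unifPart, hac]
  have hn' : (0 : ℝ) < n := Nat.cast_pos.2 hn
  have hi : ((min i n : ℕ) : ℝ) ≤ n := Nat.cast_le.2 (min_le_right _ _)
  constructor
  · have : 0 ≤ ((min i n : ℕ) : ℝ) * (c - a) / n := by
      have := sub_nonneg.2 hac
      positivity
    simp only [unifPart]; linarith
  · have : ((min i n : ℕ) : ℝ) * (c - a) / n ≤ c - a := by
      rw [div_le_iff₀ hn']
      nlinarith [sub_nonneg.2 hac]
    simp only [unifPart]; linarith

theorem isPartition_unifPart (hac : a ≤ c) {n : ℕ} (hn : n ≠ 0) :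
    IsPartition (unifPart a c n) n a c := by
  refine ⟨fun i j hij => ?_, by simp [unifPart], ?_⟩
  · have : ((min i n : ℕ) : ℝ) ≤ (min j n : ℕ) := Nat.cast_le.2 (min_le_min_right n hij)
    simp only [unifPart]
    gcongr
  · simp only [unifPart, min_self]
    field_simp
    ring

theorem unifPart_succ_sub (a c : ℝ) {n i : ℕ} (hi : i < n) :
    unifPart a c n (i + 1) - unifPart a c n i = (c - a) / n := by
  simp only [unifPart, min_eq_left hi.le, min_eq_left (Nat.succ_le_of_lt hi)]
  push_cast
  ring

theorem hasMeshLE_unifPart (a c : ℝ) (n : ℕ) : HasMeshLE (unifPart a c n) n ((c - a) / n) :=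
  fun _ hi => (unifPart_succ_sub a c hi).le

theorem rsSum_eq_stieltjesSum (F G : ℝ → ℝ) (a c : ℝ) (n : ℕ) :
    rsSum F G a c n = stieltjesSum F G (unifPart a c n) n := by
  refine Finset.sum_congr rfl fun i hi => ?_
  have hi := Finset.mem_range.1 hi
  simp only [unifPart, min_eq_left hi.le, min_eq_left (Nat.succ_le_of_lt hi)]
  push_cast
  ring_nf

theorem tendsto_rsSum (hac : a ≤ c) (hF : LipschitzOnWith L F (Icc a c))
    (hG : LipschitzOnWith M G (Icc a c)) :
    Tendsto (rsSum F G a c) atTop (𝓝 (rsInt F G a c)) := by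
  suffices h : CauchySeq fun n => rsSum F G a c (n + 1) by
    obtain ⟨I, hI⟩ := cauchySeq_tendsto_of_complete h
    rw [tendsto_add_atTop_iff_nat 1] at hI
    rwa [rsInt, hI.limUnder_eq]
  set D := (L : ℝ) * (M * (c - a))
  refine cauchySeq_of_le_tendsto_0 (fun N : ℕ => D * (2 * (c - a) / (N + 1)))
    (fun m n N hm hn => ?_) ?_
  · have hmesh : ∀ k : ℕ, N ≤ k → (c - a) / ((k + 1 : ℕ) : ℝ) ≤ (c - a) / (N + 1) :=
      fun k hk => div_le_div_of_nonneg_left (sub_nonneg.2 hac) (by positivity)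
        (by push_cast; gcongr)
    rw [Real.dist_eq, rsSum_eq_stieltjesSum, rsSum_eq_stieltjesSum]
    refine (abs_stieltjesSum_sub_stieltjesSum_le hF hG
      (isPartition_unifPart hac m.succ_ne_zero) (isPartition_unifPart hac n.succ_ne_zero)
      (hasMeshLE_unifPart a c _) (hasMeshLE_unifPart a c _)).trans ?_
    have hD : 0 ≤ D := mul_nonneg L.2 (mul_nonneg M.2 (sub_nonneg.2 hac))
    calc (L : ℝ) * ((c - a) / ((m + 1 : ℕ) : ℝ) + (c - a) / ((n + 1 : ℕ) : ℝ))
          * (M * (c - a))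
        = D * ((c - a) / ((m + 1 : ℕ) : ℝ) + (c - a) / ((n + 1 : ℕ) : ℝ)) := by ring
      _ ≤ D * (2 * (c - a) / (N + 1)) := by
        gcongr
        rw [two_mul, add_div]
        exact add_le_add (hmesh m hm) (hmesh n hn)
  · have := ((tendsto_const_div_atTop_nhds_zero_nat (2 * (c - a))).comp
      (tendsto_add_atTop_nat 1)).const_mul D
    simpa [Function.comp_def] using this

theorem abs_stieltjesSum_sub_rsInt_le (hF : LipschitzOnWith L F (Icc a c))
    (hG : LipschitzOnWith M G (Icc a c)) {p : ℕ → ℝ} {m : ℕ} {δ : ℝ}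
    (hp : IsPartition p m a c) (hpδ : HasMeshLE p m δ) :
    |stieltjesSum F G p m - rsInt F G a c| ≤ L * δ * (M * (c - a)) := by
  have hac := hp.le
  have hlim : Tendsto (fun n : ℕ => (L : ℝ) * (δ + (c - a) / n) * (M * (c - a))) atTop
      (𝓝 (L * δ * (M * (c - a)))) := by
    simpa using ((tendsto_const_div_atTop_nhds_zero_nat (c - a)).const_add δ).const_mul
      (L : ℝ) |>.mul_const (M * (c - a))
  refine le_of_tendsto_of_tendsto ((tendsto_rsSum hac hF hG).const_sub _).abs hlim ?_
  filter_upwards [eventually_ne_atTop 0] with n hn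
  rw [rsSum_eq_stieltjesSum]
  exact abs_stieltjesSum_sub_stieltjesSum_le hF hG hp (isPartition_unifPart hac hn) hpδ
    (hasMeshLE_unifPart a c n)

def appendPart (p : ℕ → ℝ) (m : ℕ) (q : ℕ → ℝ) (i : ℕ) : ℝ :=
  if i ≤ m then p i else q (i - m)

section Append

variable {p q : ℕ → ℝ} {m : ℕ}

theorem appendPart_of_le {i : ℕ} (hi : i ≤ m) : appendPart p m q i = p i := if_pos hi

theorem appendPart_add (hpq : p m = q 0) (j : ℕ) : appendPart p m q (m + j) = q j := by
  rcases j.eq_zero_or_pos with rfl | hj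
  · simpa [appendPart] using hpq
  · simp [appendPart, show ¬m + j ≤ m by omega]

theorem IsPartition.append {n : ℕ} {s : ℝ} (hp : IsPartition p m a s)
    (hq : IsPartition q n s c) : IsPartition (appendPart p m q) (m + n) a c := by
  have hpq : p m = q 0 := hp.2.2.trans hq.2.1.symm
  refine ⟨monotone_nat_of_le_succ fun i => ?_, (appendPart_of_le m.zero_le).trans hp.2.1,
    (appendPart_add hpq n).trans hq.2.2⟩
  rcases lt_or_ge i m with hi | hi
  · rw [appendPart_of_le hi.le, appendPart_of_le hi]
    exact hp.1 i.le_succ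
  · obtain ⟨j, rfl⟩ := Nat.exists_eq_add_of_le hi
    rw [appendPart_add hpq, add_assoc, appendPart_add hpq]
    exact hq.1 j.le_succ

theorem HasMeshLE.append {n : ℕ} {δ : ℝ} (hp : HasMeshLE p m δ) (hq : HasMeshLE q n δ)
    (hpq : p m = q 0) : HasMeshLE (appendPart p m q) (m + n) δ := by
  intro i hi
  rcases lt_or_ge i m with him | him
  · rw [appendPart_of_le him.le, appendPart_of_le him]
    exact hp i him
  · obtain ⟨j, rfl⟩ := Nat.exists_eq_add_of_le him
    rw [appendPart_add hpq, add_assoc, appendPart_add hpq]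
    exact hq j (by omega)

theorem stieltjesSum_append (F G : ℝ → ℝ) (hpq : p m = q 0) (n : ℕ) :
    stieltjesSum F G (appendPart p m q) (m + n) =
      stieltjesSum F G p m + stieltjesSum F G q n := by
  unfold stieltjesSum
  rw [Finset.sum_range_add]
  congr 1
  · refine Finset.sum_congr rfl fun i hi => ?_
    have hi := Finset.mem_range.1 hi
    rw [appendPart_of_le hi.le, appendPart_of_le hi]
  · refine Finset.sum_congr rfl fun j _ => ?_
    rw [appendPart_add hpq, add_assoc, appendPart_add hpq]

end Append

theorem rsInt_add {s : ℝ} (has : a ≤ s) (hsc : s ≤ c) (hF : LipschitzOnWith L F (Icc a c))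
    (hG : LipschitzOnWith M G (Icc a c)) :
    rsInt F G a c = rsInt F G a s + rsInt F G s c := by
  have hac := has.trans hsc
  have hsub₁ : Icc a s ⊆ Icc a c := Icc_subset_Icc le_rfl hsc
  have hsub₂ : Icc s c ⊆ Icc a c := Icc_subset_Icc has le_rfl
  have hsplit : Tendsto (fun n => rsSum F G a s n + rsSum F G s c n) atTop
      (𝓝 (rsInt F G a s + rsInt F G s c)) :=
    (tendsto_rsSum has (hF.mono hsub₁) (hG.mono hsub₁)).add
      (tendsto_rsSum hsc (hF.mono hsub₂) (hG.mono hsub₂))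
  refine tendsto_nhds_unique ?_ hsplit
  rw [tendsto_iff_norm_sub_tendsto_zero]
  refine squeeze_zero' (Eventually.of_forall fun _ => norm_nonneg _) ?_ (by simpa using
    ((tendsto_const_div_atTop_nhds_zero_nat (c - a)).const_mul (L : ℝ)).mul_const (M * (c - a)))
  filter_upwards [eventually_ne_atTop 0] with n hn
  have hmesh : ∀ {u v : ℝ}, v - u ≤ c - a → HasMeshLE (unifPart u v n) n ((c - a) / n) :=
    fun h i hi => (hasMeshLE_unifPart _ _ n i hi).trans
      (div_le_div_of_nonneg_right h (Nat.cast_nonneg n))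
  have hpq : unifPart a s n n = unifPart s c n 0 :=
    (isPartition_unifPart has hn).2.2.trans (isPartition_unifPart hsc hn).2.1.symm
  rw [rsSum_eq_stieltjesSum, rsSum_eq_stieltjesSum, ← stieltjesSum_append F G hpq,
    Real.norm_eq_abs]
  exact abs_stieltjesSum_sub_rsInt_le hF hG
    ((isPartition_unifPart has hn).append (isPartition_unifPart hsc hn))
    ((hmesh (by linarith)).append (hmesh (by linarith)) hpq)

theorem abs_rsInt_le {C : ℝ} (hac : a ≤ c) (hF : LipschitzOnWith L F (Icc a c))
    (hG : LipschitzOnWith M G (Icc a c)) (hC : ∀ t ∈ Icc a c, |F t| ≤ C) :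
    |rsInt F G a c| ≤ C * (M * (c - a)) := by
  refine le_of_tendsto (tendsto_rsSum hac hF hG).abs ?_
  filter_upwards [eventually_ne_atTop 0] with n hn
  rw [rsSum_eq_stieltjesSum]
  exact abs_stieltjesSum_le (isPartition_unifPart hac hn) hG hC

theorem rsInt_congr {F' G' : ℝ → ℝ} (hac : a ≤ c) (hF : EqOn F F' (Icc a c))
    (hG : EqOn G G' (Icc a c)) : rsInt F G a c = rsInt F' G' a c := by
  unfold rsInt
  congr 1
  funext n
  rcases eq_or_ne n 0 with rfl | hn
  · simp [rsSum]
  rw [rsSum_eq_stieltjesSum, rsSum_eq_stieltjesSum,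
    stieltjesSum_congr (isPartition_unifPart hac hn) hF hG]

theorem eventually_hasMeshLE_comp_unifPart {ψ : ℝ → ℝ} (hac : a ≤ c)
    (hψ : ContinuousOn ψ (Icc a c)) {η : ℝ} (hη : 0 < η) :
    ∀ᶠ n in atTop, HasMeshLE (ψ ∘ unifPart a c n) n η := by
  obtain ⟨δ, hδ, hψδ⟩ := Metric.uniformContinuousOn_iff.1
    (isCompact_Icc.uniformContinuousOn_of_continuous hψ) η hη
  filter_upwards [(tendsto_const_div_atTop_nhds_zero_nat (c - a)).eventually (gt_mem_nhds hδ)]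
    with n hn i hi
  have h := hψδ _ (unifPart_mem_Icc hac n (i + 1)) _ (unifPart_mem_Icc hac n i) (by
    rwa [Real.dist_eq, unifPart_succ_sub a c hi, abs_of_nonneg (div_nonneg (sub_nonneg.2 hac)
      n.cast_nonneg)])
  exact (le_abs_self _).trans (Real.dist_eq _ _ ▸ h).le

theorem rsInt_comp {ψ : ℝ → ℝ} {t : ℝ} (hat : a ≤ t) (hψ : MonotoneOn ψ (Icc a t))
    (hψc : ContinuousOn ψ (Icc a t)) (hF : LipschitzOnWith L F (Icc (ψ a) (ψ t)))
    (hG : LipschitzOnWith M G (Icc (ψ a) (ψ t))) :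
    rsInt (F ∘ ψ) (G ∘ ψ) a t = rsInt F G (ψ a) (ψ t) := by
  suffices h : Tendsto (rsSum (F ∘ ψ) (G ∘ ψ) a t) atTop (𝓝 (rsInt F G (ψ a) (ψ t))) by
    rw [rsInt, h.limUnder_eq]
  have hpart : ∀ n ≠ 0, IsPartition (ψ ∘ unifPart a t n) n (ψ a) (ψ t) := fun n hn =>
    ⟨fun i j hij => hψ (unifPart_mem_Icc hat n i) (unifPart_mem_Icc hat n j)
      ((isPartition_unifPart hat hn).1 hij),
      congrArg ψ (isPartition_unifPart hat hn).2.1,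
      congrArg ψ (isPartition_unifPart hat hn).2.2⟩
  have hD : 0 ≤ (L : ℝ) * (M * (ψ t - ψ a)) :=
    mul_nonneg L.2 (mul_nonneg M.2 (sub_nonneg.2 (hψ ⟨le_rfl, hat⟩ ⟨hat, le_rfl⟩ hat)))
  rw [Metric.tendsto_nhds]
  intro ε hε
  filter_upwards [eventually_ne_atTop 0, eventually_hasMeshLE_comp_unifPart hat hψc
    (div_pos hε (by linarith : 0 < (L : ℝ) * (M * (ψ t - ψ a)) + 1))] with n hn hmesh
  rw [Real.dist_eq, rsSum_eq_stieltjesSum]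
  calc |stieltjesSum F G (ψ ∘ unifPart a t n) n - rsInt F G (ψ a) (ψ t)|
      ≤ L * (ε / (L * (M * (ψ t - ψ a)) + 1)) * (M * (ψ t - ψ a)) :=
        abs_stieltjesSum_sub_rsInt_le hF hG (hpart n hn) hmesh
    _ < ε := by
        rw [show (L : ℝ) * (ε / (L * (M * (ψ t - ψ a)) + 1)) * (M * (ψ t - ψ a))
          = ε * (L * (M * (ψ t - ψ a)) / (L * (M * (ψ t - ψ a)) + 1)) by ring]
        exact mul_lt_of_lt_one_right hε ((div_lt_one (by linarith)).2 (by linarith))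

theorem abs_stieltjesSum_sub_le_of_forall_abs_sub_le {F' G' : ℝ → ℝ} {p : ℕ → ℝ} {n : ℕ}
    {η C : ℝ} (hp : IsPartition p n a c) (hG' : LipschitzOnWith M G' (Icc a c))
    (hC : ∀ t ∈ Icc a c, |F t| ≤ C) (hF : ∀ t ∈ Icc a c, |F' t - F t| ≤ η)
    (hG : ∀ t ∈ Icc a c, |G' t - G t| ≤ η) :
    |stieltjesSum F' G' p n - stieltjesSum F G p n| ≤
      η * (M * (c - a)) + n * (C * (2 * η)) := by
  have hterm : ∀ i ∈ Finset.range n,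
      |F' (p i) * (G' (p (i + 1)) - G' (p i)) - F (p i) * (G (p (i + 1)) - G (p i))|
        ≤ η * (M * (p (i + 1) - p i)) + C * (2 * η) := by
    intro i hi
    have hi := Finset.mem_range.1 hi
    have h₀ := hp.mem_Icc hi.le
    have h₁ := hp.mem_Icc hi
    have hΔ := hG'.dist_le_mul _ h₁ _ h₀
    rw [Real.dist_eq, Real.dist_eq, abs_of_nonneg (sub_nonneg.2 (hp.1 i.le_succ))] at hΔ
    have hΔ' : |(G' (p (i + 1)) - G' (p i)) - (G (p (i + 1)) - G (p i))| ≤ 2 * η := by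
      have := abs_sub (G' (p (i + 1)) - G (p (i + 1))) (G' (p i) - G (p i))
      rw [show G' (p (i + 1)) - G' (p i) - (G (p (i + 1)) - G (p i))
        = G' (p (i + 1)) - G (p (i + 1)) - (G' (p i) - G (p i)) by ring]
      linarith [hG _ h₁, hG _ h₀]
    rw [show F' (p i) * (G' (p (i + 1)) - G' (p i)) - F (p i) * (G (p (i + 1)) - G (p i))
      = (F' (p i) - F (p i)) * (G' (p (i + 1)) - G' (p i))
        + F (p i) * ((G' (p (i + 1)) - G' (p i)) - (G (p (i + 1)) - G (p i))) by ring]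
    refine (abs_add_le _ _).trans (add_le_add ?_ ?_) <;> rw [abs_mul]
    · exact mul_le_mul (hF _ h₀) hΔ (abs_nonneg _) ((abs_nonneg _).trans (hF _ h₀))
    · exact mul_le_mul (hC _ h₀) hΔ' (abs_nonneg _) ((abs_nonneg _).trans (hC _ h₀))
  unfold stieltjesSum
  rw [← Finset.sum_sub_distrib]
  refine (Finset.abs_sum_le_sum_abs _ _).trans ((Finset.sum_le_sum hterm).trans_eq ?_)
  rw [Finset.sum_add_distrib, ← Finset.mul_sum, ← Finset.mul_sum,
    Finset.sum_range_sub (fun i => p i), hp.2.1, hp.2.2, Finset.sum_const, Finset.card_range,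
    nsmul_eq_mul]

theorem abs_rsSum_sub_rsInt_le {t : ℝ} (hat : a ≤ t) (hF : LipschitzOnWith L F (Icc a t))
    (hG : LipschitzOnWith M G (Icc a t)) {n : ℕ} (hn : n ≠ 0) :
    |rsSum F G a t n - rsInt F G a t| ≤ L * M * (t - a) ^ 2 / n := by
  rw [rsSum_eq_stieltjesSum]
  refine (abs_stieltjesSum_sub_rsInt_le hF hG (isPartition_unifPart hat hn)
    (hasMeshLE_unifPart a t n)).trans_eq ?_
  ring

theorem tendstoUniformlyOn_rsInt {ι : Type*} {l : Filter ι} {Fs Gs : ι → ℝ → ℝ} {C : ℝ}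
    (hFs : TendstoUniformlyOn Fs F l (Icc a c)) (hGs : TendstoUniformlyOn Gs G l (Icc a c))
    (hFsL : ∀ᶠ k in l, LipschitzOnWith L (Fs k) (Icc a c))
    (hGsM : ∀ᶠ k in l, LipschitzOnWith M (Gs k) (Icc a c)) (hF : LipschitzOnWith L F (Icc a c))
    (hG : LipschitzOnWith M G (Icc a c)) (hC : ∀ t ∈ Icc a c, |F t| ≤ C) :
    TendstoUniformlyOn (fun k t => rsInt (Fs k) (Gs k) a t) (fun t => rsInt F G a t) l
      (Icc a c) := by
  rw [Metric.tendstoUniformlyOn_iff]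
  intro ε hε
  obtain ⟨n, hn0, hn⟩ := ((eventually_ne_atTop 0).and
    ((tendsto_const_div_atTop_nhds_zero_nat ((L : ℝ) * M * (c - a) ^ 2)).eventually
      (gt_mem_nhds (by positivity : 0 < ε / 3)))).exists
  obtain ⟨η, hη, hηε⟩ := exists_pos_mul_lt (by positivity : 0 < ε / 3)
    (M * (c - a) + n * (2 * |C|))
  filter_upwards [Metric.tendstoUniformlyOn_iff.1 hFs η hη,
    Metric.tendstoUniformlyOn_iff.1 hGs η hη, hFsL, hGsM] with k hFk hGk hLk hMk t ht
  have hsub : Icc a t ⊆ Icc a c := Icc_subset_Icc le_rfl ht.2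
  have hta : 0 ≤ t - a := sub_nonneg.2 ht.1
  have happrox : ∀ {F' G' : ℝ → ℝ}, LipschitzOnWith L F' (Icc a c) →
      LipschitzOnWith M G' (Icc a c) → |rsSum F' G' a t n - rsInt F' G' a t| < ε / 3 :=
    fun hF' hG' => (abs_rsSum_sub_rsInt_le ht.1 (hF'.mono hsub) (hG'.mono hsub) hn0).trans_lt
      (lt_of_le_of_lt (by gcongr; linarith [ht.2]) hn)
  have hclose : |rsSum (Fs k) (Gs k) a t n - rsSum F G a t n| < ε / 3 := by
    rw [rsSum_eq_stieltjesSum, rsSum_eq_stieltjesSum]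
    refine (abs_stieltjesSum_sub_le_of_forall_abs_sub_le (isPartition_unifPart ht.1 hn0)
      (hMk.mono hsub) (fun u hu => (hC u (hsub hu)).trans (le_abs_self C))
      (fun u hu => by rw [abs_sub_comm]; exact (hFk u (hsub hu)).le)
      (fun u hu => by rw [abs_sub_comm]; exact (hGk u (hsub hu)).le)).trans_lt
      (lt_of_le_of_lt ?_ hηε)
    calc η * (M * (t - a)) + n * (|C| * (2 * η))
        ≤ η * (M * (c - a)) + n * (|C| * (2 * η)) := by gcongr; linarith [ht.2]
      _ = (M * (c - a) + n * (2 * |C|)) * η := by ring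
  rw [Real.dist_eq]
  have h₁ := happrox hF hG
  have h₂ := happrox hLk hMk
  rw [abs_sub_lt_iff] at h₁ h₂ hclose ⊢
  constructor <;> linarith [h₁.1, h₁.2, h₂.1, h₂.2, hclose.1, hclose.2]

end RiemannStieltjes

theorem lipschitzOnWith_of_forall_le {E : Type*} [PseudoMetricSpace E] {f : ℝ → E} {s : Set ℝ}
    {K : ℝ≥0} (h : ∀ x ∈ s, ∀ y ∈ s, x ≤ y → dist (f y) (f x) ≤ K * (y - x)) :
    LipschitzOnWith K f s := by
  refine LipschitzOnWith.of_dist_le_mul fun x hx y hy => ?_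
  rcases le_total x y with hxy | hxy
  · rw [dist_comm, Real.dist_eq, abs_sub_comm, abs_of_nonneg (sub_nonneg.2 hxy)]
    exact h x hx y hy hxy
  · rw [Real.dist_eq, abs_of_nonneg (sub_nonneg.2 hxy)]
    exact h y hy x hx hxy

theorem lipschitzWith_euclideanSpace_apply {ι : Type*} [Fintype ι] (i : ι) :
    LipschitzWith 1 fun v : EuclideanSpace ℝ ι => v i :=
  ((LipschitzWith.eval (α := fun _ : ι => ℝ) i).comp
    (PiLp.lipschitzWith_ofLp 2 fun _ : ι => ℝ)).weaken (mul_one 1).le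

section SignatureWords

variable {d : ℕ} {a b : ℝ} {M : ℝ≥0} {x : ℝ → Vec d}

theorem LipschitzOnWith.euclideanSpace_apply {s : Set ℝ} (hx : LipschitzOnWith M x s)
    (i : Fin d) : LipschitzOnWith M (fun u => x u i) s :=
  ((lipschitzWith_euclideanSpace_apply i).comp_lipschitzOnWith hx).weaken (one_mul M).le

theorem sigWord_cons (x : ℝ → Vec d) (a : ℝ) (i : Fin d) (w : List (Fin d)) (t : ℝ) :
    sigWord x a (i :: w) t = rsInt (sigWord x a w) (fun u => x u i) a t :=
  rfl

theorem sigWord_congr {y : ℝ → Vec d} (h : EqOn x y (Icc a b)) (w : List (Fin d)) :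
    EqOn (sigWord x a w) (sigWord y a w) (Icc a b) := by
  induction w with
  | nil => exact fun _ _ => rfl
  | cons i w ih =>
    intro t ht
    have hsub : Icc a t ⊆ Icc a b := Icc_subset_Icc le_rfl ht.2
    exact rsInt_congr ht.1 (ih.mono hsub) fun u hu => by simp only [h (hsub hu)]

theorem signatureT_eq_of_forall_sigWord {y : ℝ → Vec d}
    (h : ∀ w, sigWord x a w b = sigWord y a w b) : signatureT x a b = signatureT y a b := by
  funext k
  ext idx
  exact h _

theorem signatureT_congr {y : ℝ → Vec d} (hab : a ≤ b) (h : EqOn x y (Icc a b)) :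
    signatureT x a b = signatureT y a b :=
  signatureT_eq_of_forall_sigWord fun w => sigWord_congr h w ⟨hab, le_rfl⟩

theorem sigWord_abs_le_and_lipschitzOnWith (hx : LipschitzOnWith M x (Icc a b))
    (w : List (Fin d)) :
    (∀ t ∈ Icc a b, |sigWord x a w t| ≤ (1 + M * nndist a b : ℝ≥0) ^ w.length) ∧
      LipschitzOnWith ((1 + M * nndist a b) ^ w.length * M) (sigWord x a w) (Icc a b) := by
  set B : ℝ≥0 := 1 + M * nndist a b
  induction w with
  | nil =>
    exact ⟨fun t _ => by simp [sigWord], ((LipschitzWith.const 1).lipschitzOnWith).weaken bot_le⟩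
  | cons i w ih =>
    obtain ⟨hbd, hlip⟩ := ih
    have hxi := hx.euclideanSpace_apply i
    have hinc : ∀ s ∈ Icc a b, ∀ t ∈ Icc a b, s ≤ t →
        |rsInt (sigWord x a w) (fun u => x u i) s t| ≤ B ^ w.length * (M * (t - s)) :=
      fun s hs t ht hst => abs_rsInt_le hst (hlip.mono (Icc_subset_Icc hs.1 ht.2))
        (hxi.mono (Icc_subset_Icc hs.1 ht.2))
        fun u hu => hbd u ⟨hs.1.trans hu.1, hu.2.trans ht.2⟩
    have hMB : ∀ t ∈ Icc a b, (M : ℝ) * (t - a) ≤ B := fun t ht => by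
      have : (M : ℝ) * (t - a) ≤ M * dist a b := by
        rw [Real.dist_eq, abs_sub_comm, abs_of_nonneg (by linarith [ht.1, ht.2])]
        exact mul_le_mul_of_nonneg_left (by linarith [ht.2]) M.2
      simp only [B, NNReal.coe_add, NNReal.coe_one, NNReal.coe_mul, coe_nndist]
      linarith
    refine ⟨fun t ht => ?_, lipschitzOnWith_of_forall_le fun s hs t ht hst => ?_⟩
    · calc |sigWord x a (i :: w) t| ≤ B ^ w.length * (M * (t - a)) :=
            hinc a ⟨le_rfl, ht.1.trans ht.2⟩ t ht ht.1
        _ ≤ B ^ w.length * B := mul_le_mul_of_nonneg_left (hMB t ht) (by positivity)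
        _ = (B : ℝ) ^ (i :: w).length := by rw [List.length_cons, pow_succ]
    · rw [Real.dist_eq, sigWord_cons, sigWord_cons, rsInt_add hs.1 hst
        (hlip.mono (Icc_subset_Icc le_rfl ht.2)) (hxi.mono (Icc_subset_Icc le_rfl ht.2)),
        add_sub_cancel_left]
      refine (hinc s hs t ht hst).trans ?_
      have hB : (1 : ℝ) ≤ B := by simp only [B]; exact_mod_cast le_self_add
      push_cast
      rw [← mul_assoc]
      gcongr
      simp

theorem sigWord_comp (hx : LipschitzOnWith M x (Icc a b)) {ψ : ℝ → ℝ}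
    (hψ : MonotoneOn ψ (Icc a b)) (hψc : ContinuousOn ψ (Icc a b)) (hψa : ψ a = a)
    (hψb : ψ b = b) (w : List (Fin d)) :
    ∀ t ∈ Icc a b, sigWord (x ∘ ψ) a w t = sigWord x a w (ψ t) := by
  induction w with
  | nil => exact fun _ _ => rfl
  | cons i w ih =>
    intro t ht
    have hsub : Icc a t ⊆ Icc a b := Icc_subset_Icc le_rfl ht.2
    have hsub' : Icc (ψ a) (ψ t) ⊆ Icc a b :=
      Icc_subset_Icc hψa.ge (hψb ▸ hψ ht ⟨ht.1.trans ht.2, le_rfl⟩ ht.2)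
    calc sigWord (x ∘ ψ) a (i :: w) t
        = rsInt (sigWord x a w ∘ ψ) ((fun u => x u i) ∘ ψ) a t :=
          rsInt_congr ht.1 (fun u hu => ih u (hsub hu)) fun _ _ => rfl
      _ = rsInt (sigWord x a w) (fun u => x u i) (ψ a) (ψ t) :=
          rsInt_comp ht.1 (hψ.mono hsub) (hψc.mono hsub)
            ((sigWord_abs_le_and_lipschitzOnWith hx w).2.mono hsub')
            ((hx.euclideanSpace_apply i).mono hsub')
      _ = sigWord x a (i :: w) (ψ t) := by rw [hψa, sigWord_cons]

theorem tendstoUniformlyOn_sigWord {ι : Type*} {l : Filter ι} {X : ι → ℝ → Vec d}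
    (hX : TendstoUniformlyOn X x l (Icc a b))
    (hXM : ∀ᶠ k in l, LipschitzOnWith M (X k) (Icc a b)) (hx : LipschitzOnWith M x (Icc a b))
    (w : List (Fin d)) :
    TendstoUniformlyOn (fun k => sigWord (X k) a w) (sigWord x a w) l (Icc a b) := by
  induction w with
  | nil => exact tendsto_const_nhds.tendstoUniformlyOn_const _
  | cons i w ih =>
    exact tendstoUniformlyOn_rsInt ih
      ((lipschitzWith_euclideanSpace_apply i).uniformContinuous.comp_tendstoUniformlyOn hX)
      (hXM.mono fun k hk => (sigWord_abs_le_and_lipschitzOnWith hk w).2)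
      (hXM.mono fun k hk => hk.euclideanSpace_apply i)
      (sigWord_abs_le_and_lipschitzOnWith hx w).2 (hx.euclideanSpace_apply i)
      (sigWord_abs_le_and_lipschitzOnWith hx w).1

end SignatureWords

theorem Finset.sum_rpow_le_rpow_sum {ι : Type*} (s : Finset ι) {f : ι → ℝ}
    (hf : ∀ i ∈ s, 0 ≤ f i) {p : ℝ} (hp : 1 ≤ p) : ∑ i ∈ s, f i ^ p ≤ (∑ i ∈ s, f i) ^ p := by
  classical
  induction s using Finset.induction_on with
  | empty => simp [Real.zero_rpow (by linarith : p ≠ 0)]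
  | insert j s hj ih =>
    rw [Finset.sum_insert hj, Finset.sum_insert hj]
    have hfj := hf j (Finset.mem_insert_self j s)
    have hs := Finset.sum_nonneg fun i hi => hf i (Finset.mem_insert_of_mem hi)
    linarith [Real.add_rpow_le_rpow_add hfj hs hp,
      ih fun i hi => hf i (Finset.mem_insert_of_mem hi)]

section Variation

variable {E : Type*} [NormedAddCommGroup E] {x : ℝ → E} {a b p : ℝ}

theorem pvar_one (x : ℝ → E) (a b : ℝ) : pvar x 1 a b = sSup (varSums x 1 a b) := by
  simp [pvar]

theorem pvar_one_nonneg (x : ℝ → E) (a b : ℝ) : 0 ≤ pvar x 1 a b := by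
  rw [pvar_one]
  refine Real.sSup_nonneg ?_
  rintro _ ⟨n, t, -, -, -, rfl⟩
  exact Finset.sum_nonneg fun i _ => Real.rpow_nonneg (norm_nonneg _) _

theorem sum_norm_sub_le_of_lipschitzOnWith {K : ℝ≥0} (hx : LipschitzOnWith K x (Icc a b))
    {t : ℕ → ℝ} {n : ℕ} (ht : IsPartition t n a b) :
    ∑ i ∈ Finset.range n, ‖x (t (i + 1)) - x (t i)‖ ≤ K * (b - a) := by
  calc ∑ i ∈ Finset.range n, ‖x (t (i + 1)) - x (t i)‖
      ≤ ∑ i ∈ Finset.range n, K * (t (i + 1) - t i) := Finset.sum_le_sum fun i hi => by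
        have hi := Finset.mem_range.1 hi
        have h := hx.dist_le_mul _ (ht.mem_Icc hi) _ (ht.mem_Icc hi.le)
        rwa [dist_eq_norm, Real.dist_eq, abs_of_nonneg (sub_nonneg.2 (ht.1 i.le_succ))] at h
    _ = K * (b - a) := by
        rw [← Finset.mul_sum, Finset.sum_range_sub (fun i => t i), ht.2.1, ht.2.2]

theorem le_of_mem_varSums_of_lipschitzOnWith {K : ℝ≥0} (hx : LipschitzOnWith K x (Icc a b))
    (hp : 1 ≤ p) {s : ℝ} (hs : s ∈ varSums x p a b) : s ≤ (K * (b - a)) ^ p := by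
  obtain ⟨n, t, ht, h0, hn, rfl⟩ := hs
  exact (Finset.sum_rpow_le_rpow_sum _ (fun i _ => norm_nonneg _) hp).trans
    (Real.rpow_le_rpow (Finset.sum_nonneg fun i _ => norm_nonneg _)
      (sum_norm_sub_le_of_lipschitzOnWith hx ⟨ht, h0, hn⟩) (by linarith))

theorem LipschitzOnWith.memCp {K : ℝ≥0} (hx : LipschitzOnWith K x (Icc a b)) (hp : 1 ≤ p) :
    MemCp x p a b :=
  ⟨hx.continuousOn, _, fun _ hs => le_of_mem_varSums_of_lipschitzOnWith hx hp hs⟩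

theorem LipschitzOnWith.pvar_one_le {K : ℝ≥0} (hx : LipschitzOnWith K x (Icc a b))
    (hab : a ≤ b) : pvar x 1 a b ≤ K * (b - a) := by
  rw [pvar_one]
  refine csSup_le ⟨_, 1, fun i => if i = 0 then a else b, ?_, rfl, rfl, rfl⟩ fun s hs => ?_
  · exact monotone_nat_of_le_succ fun i => by
      split_ifs <;> first | exact le_rfl | exact hab | (exfalso; omega)
  · simpa using le_of_mem_varSums_of_lipschitzOnWith hx le_rfl hs

/-- A partition of a subset of `[a, b]` is padded with the two endpoints. -/
theorem eVariationOn_Icc_le_ofReal_pvar_one (hx : BddAbove (varSums x 1 a b)) :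
    eVariationOn x (Icc a b) ≤ ENNReal.ofReal (pvar x 1 a b) := by
  refine iSup_le fun ⟨n, u, hu, hus⟩ => ?_
  set t : ℕ → ℝ := fun i => if i = 0 then a else if i ≤ n + 1 then u (i - 1) else b
  have ht : IsPartition t (n + 2) a b := by
    refine ⟨monotone_nat_of_le_succ fun i => ?_, rfl, by simp [t]⟩
    simp only [t]
    split_ifs <;> first
      | exact le_rfl | exact (hus _).1 | exact (hus _).2 | exact hu (by omega) | contradiction
      | (exfalso; omega)
  have hsum : ∑ i ∈ Finset.range n, ‖x (u (i + 1)) - x (u i)‖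
      ≤ ∑ i ∈ Finset.range (n + 2), ‖x (t (i + 1)) - x (t i)‖ := by
    rw [Finset.sum_range_succ, Finset.sum_range_succ']
    have hmid : ∀ i ∈ Finset.range n,
        ‖x (t (i + 1 + 1)) - x (t (i + 1))‖ = ‖x (u (i + 1)) - x (u i)‖ := fun i hi => by
      have hi := Finset.mem_range.1 hi
      simp only [t, if_neg (Nat.succ_ne_zero _), if_pos (show i + 1 + 1 ≤ n + 1 by omega),
        if_pos (show i + 1 ≤ n + 1 by omega), Nat.add_sub_cancel]
    rw [Finset.sum_congr rfl hmid]
    linarith [norm_nonneg (x (t (n + 1 + 1)) - x (t (n + 1))), norm_nonneg (x (t 1) - x (t 0))]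
  have hmem : ∑ i ∈ Finset.range (n + 2), ‖x (t (i + 1)) - x (t i)‖ ∈ varSums x 1 a b :=
    ⟨n + 2, t, ht.1, ht.2.1, ht.2.2, by simp⟩
  simp only [edist_dist, dist_eq_norm]
  rw [← ENNReal.ofReal_sum_of_nonneg fun i _ => norm_nonneg _, pvar_one]
  exact ENNReal.ofReal_le_ofReal (hsum.trans (le_csSup hx hmem))

theorem MemCp.boundedVariationOn (hx : MemCp x 1 a b) : BoundedVariationOn x (Icc a b) :=
  ne_top_of_le_ne_top ENNReal.ofReal_ne_top (eVariationOn_Icc_le_ofReal_pvar_one hx.2)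

theorem MemCp.variationOnFromTo_le_pvar_one (hx : MemCp x 1 a b) (hab : a ≤ b) :
    variationOnFromTo x (Icc a b) a b ≤ pvar x 1 a b := by
  rw [variationOnFromTo.eq_of_le _ _ hab, inter_self]
  exact ENNReal.toReal_le_of_le_ofReal (pvar_one_nonneg x a b)
    (eVariationOn_Icc_le_ofReal_pvar_one hx.2)

end Variation

section Reparametrisation

theorem variationOnFromTo_eq_sub {α E : Type*} [LinearOrder α] [PseudoEMetricSpace E]
    (f : α → E) (s : Set α) (x y : α) :
    variationOnFromTo f s x y =
      (eVariationOn f (s ∩ Icc x y)).toReal - (eVariationOn f (s ∩ Icc y x)).toReal := by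
  rcases le_total x y with hxy | hxy
  · rw [variationOnFromTo.eq_of_le f s hxy, eVariationOn.subsingleton f (s := s ∩ Icc y x)
      fun u hu v hv => le_antisymm (hu.2.2.trans (hxy.trans hv.2.1))
        (hv.2.2.trans (hxy.trans hu.2.1)), ENNReal.toReal_zero, sub_zero]
  · rw [variationOnFromTo.eq_of_ge f s hxy, eVariationOn.subsingleton f (s := s ∩ Icc x y)
      fun u hu v hv => le_antisymm (hu.2.2.trans (hxy.trans hv.2.1))
        (hv.2.2.trans (hxy.trans hu.2.1)), ENNReal.toReal_zero, zero_sub]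

theorem continuousOn_variationOnFromTo {α E : Type*} [LinearOrder α] [TopologicalSpace α]
    [OrderTopology α] [PseudoEMetricSpace E] {f : α → E} {s : Set α} (hf : BoundedVariationOn f s)
    (hc : ContinuousOn f s) {a : α} (ha : a ∈ s) : ContinuousOn (variationOnFromTo f s a) s := by
  intro x hx
  have htoReal := ENNReal.tendsto_toReal ENNReal.zero_ne_top
  have hcx := (hc x hx).mono (inter_subset_left (t := Ici x))
  have hcx' := (hc x hx).mono (inter_subset_left (t := Iic x))
  have hlim := tendsto_const_nhds (x := variationOnFromTo f s a x) |>.add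
    ((htoReal.comp (hf.tendsto_eVariationOn_Icc_zero_right x hcx)).sub
      (htoReal.comp (hf.tendsto_eVariationOn_Icc_zero_left hcx')))
  simp only [ENNReal.toReal_zero, sub_zero, add_zero] at hlim
  refine hlim.congr' ?_
  filter_upwards [self_mem_nhdsWithin] with y hy
  rw [Function.comp_apply, Function.comp_apply, ← variationOnFromTo_eq_sub,
    variationOnFromTo.add hf.locallyBoundedVariationOn ha hx hy]

theorem HasConstantSpeedOnWith.lipschitzOnWith {E : Type*} [PseudoMetricSpace E] {f : ℝ → E}
    {s : Set ℝ} {l : ℝ≥0} (h : HasConstantSpeedOnWith f s l) : LipschitzOnWith l f s :=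
  lipschitzOnWith_of_forall_le fun x hx y hy hxy => by
    have hle := eVariationOn.edist_le f (s := s ∩ Icc x y) ⟨hy, hxy, le_rfl⟩ ⟨hx, le_rfl, hxy⟩
    rw [hasConstantSpeedOnWith_iff_ordered.1 h hx hy hxy, edist_dist] at hle
    exact (ENNReal.ofReal_le_ofReal_iff (mul_nonneg l.2 (sub_nonneg.2 hxy))).1 hle

theorem eqOn_const_of_variationOnFromTo_eq_zero {E : Type*} [EMetricSpace E] {y : ℝ → E}
    {a b : ℝ} (hyv : BoundedVariationOn y (Icc a b)) (h : variationOnFromTo y (Icc a b) a b = 0) :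
    ∀ t ∈ Icc a b, y t = y a := fun t ht => by
  have ha : a ∈ Icc a b := ⟨le_rfl, ht.1.trans ht.2⟩
  have h0 : variationOnFromTo y (Icc a b) a t = 0 := le_antisymm
    (h ▸ variationOnFromTo.monotoneOn hyv.locallyBoundedVariationOn ha ht ⟨ha.2, le_rfl⟩ ht.2)
    (variationOnFromTo.nonneg_of_le _ _ ht.1)
  exact (edist_eq_zero.1
    (variationOnFromTo.edist_zero_of_eq_zero hyv.locallyBoundedVariationOn ha ht h0)).symm

theorem lipschitzOnWith_naturalParameterization {E : Type*} [PseudoMetricSpace E] {y : ℝ → E}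
    {a b : ℝ} (hab : a ≤ b) (hy : ContinuousOn y (Icc a b))
    (hyv : BoundedVariationOn y (Icc a b)) :
    LipschitzOnWith 1 (naturalParameterization y (Icc a b) a)
      (Icc 0 (variationOnFromTo y (Icc a b) a b)) := by
  have ha : a ∈ Icc a b := left_mem_Icc.2 hab
  refine (has_unit_speed_naturalParameterization y hyv.locallyBoundedVariationOn
    ha).lipschitzOnWith.mono ?_
  have := intermediate_value_Icc hab (continuousOn_variationOnFromTo hyv hy ha)
  rwa [variationOnFromTo.self] at this

/-- `z` is the natural (arc-length) parametrisation of `y`, run at constant speed over `[a, b]`,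
and `ψ` is the rescaled variation function of `y`. -/
theorem exists_lipschitzOnWith_comp_eq {E : Type*} [MetricSpace E] {y : ℝ → E} {a b : ℝ}
    (hab : a ≤ b) (hy : ContinuousOn y (Icc a b)) (hyv : BoundedVariationOn y (Icc a b)) :
    ∃ (z : ℝ → E) (ψ : ℝ → ℝ),
      LipschitzOnWith (variationOnFromTo y (Icc a b) a b / (b - a)).toNNReal z (Icc a b) ∧
      MonotoneOn ψ (Icc a b) ∧ ContinuousOn ψ (Icc a b) ∧ ψ a = a ∧ ψ b = b ∧
      EqOn y (z ∘ ψ) (Icc a b) := by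
  set v := variationOnFromTo y (Icc a b) a
  have ha : a ∈ Icc a b := left_mem_Icc.2 hab
  have hva : v a = 0 := variationOnFromTo.self _ _ _
  rcases (variationOnFromTo.nonneg_of_le y (Icc a b) hab : 0 ≤ v b).eq_or_lt with hL | hL
  · refine ⟨y, id, ?_, monotoneOn_id, continuousOn_id, rfl, rfl, fun _ _ => rfl⟩
    have hconst := eqOn_const_of_variationOnFromTo_eq_zero hyv hL.symm
    rw [show v b = 0 from hL.symm, zero_div, Real.toNNReal_zero]
    exact LipschitzOnWith.of_dist_le_mul fun t ht u hu => by simp [hconst t ht, hconst u hu]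
  set L := v b
  have hba : 0 < b - a := sub_pos.2 (hab.lt_of_ne fun h => by subst h; exact hL.ne' hva)
  set k := L / (b - a)
  have hk : 0 < k := div_pos hL hba
  have hscale : LipschitzOnWith k.toNNReal (fun t => k * (t - a)) (Icc a b) :=
    lipschitzOnWith_of_forall_le fun t _ u _ htu => by
      rw [Real.dist_eq, ← mul_sub, sub_sub_sub_cancel_right, abs_mul, abs_of_pos hk,
        abs_of_nonneg (sub_nonneg.2 htu), Real.coe_toNNReal _ hk.le]
  have hmaps : MapsTo (fun t => k * (t - a)) (Icc a b) (Icc 0 L) := fun t ht =>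
    ⟨mul_nonneg hk.le (sub_nonneg.2 ht.1), by
      rw [show L = k * (b - a) by simp only [k]; field_simp [hba.ne']]
      exact mul_le_mul_of_nonneg_left (by linarith [ht.2]) hk.le⟩
  refine ⟨fun t => naturalParameterization y (Icc a b) a (k * (t - a)), fun t => a + v t / k,
    ((lipschitzOnWith_naturalParameterization hab hy hyv).comp hscale hmaps).weaken (one_mul _).le,
    fun t ht u hu htu => ?_, continuousOn_const.add
      ((continuousOn_variationOnFromTo hyv hy ha).div_const k), by simp [hva], ?_, fun t ht => ?_⟩
  · show a + v t / k ≤ a + v u / k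
    gcongr
    exact variationOnFromTo.monotoneOn hyv.locallyBoundedVariationOn ha ht hu htu
  · show a + L / (L / (b - a)) = b
    rw [div_div_cancel₀ hL.ne']
    ring
  · simp only [Function.comp_apply, add_sub_cancel_left, mul_div_cancel₀ _ hk.ne']
    exact (edist_eq_zero.1
      (edist_naturalParameterization_eq_zero hyv.locallyBoundedVariationOn ha ht)).symm

theorem exists_lipschitzOnWith_signatureT_eq {d : ℕ} {y : ℝ → Vec d} {a b : ℝ} (hab : a ≤ b)
    (hy : ContinuousOn y (Icc a b)) (hyv : BoundedVariationOn y (Icc a b)) :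
    ∃ z : ℝ → Vec d,
      LipschitzOnWith (variationOnFromTo y (Icc a b) a b / (b - a)).toNNReal z (Icc a b) ∧
      z a = y a ∧ signatureT z a b = signatureT y a b := by
  obtain ⟨z, ψ, hz, hψm, hψc, hψa, hψb, hyz⟩ := exists_lipschitzOnWith_comp_eq hab hy hyv
  refine ⟨z, hz, by rw [hyz ⟨le_rfl, hab⟩, Function.comp_apply, hψa], ?_⟩
  rw [signatureT_congr hab hyz]
  refine signatureT_eq_of_forall_sigWord fun w => ?_
  rw [sigWord_comp hz hψm hψc hψa hψb w b ⟨hab, le_rfl⟩, hψb]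

end Reparametrisation

theorem isCompact_setOf_lipschitzWith {X E : Type*} [PseudoMetricSpace X] [CompactSpace X]
    [MetricSpace E] [ProperSpace E] (K : ℝ≥0) (x₀ : X) (e : E) :
    IsCompact {f : C(X, E) | LipschitzWith K f ∧ f x₀ = e} := by
  refine ArzelaAscoli.isCompact_of_equicontinuous _ ?_
    (LipschitzWith.uniformEquicontinuous _ K fun f => f.2.1).equicontinuous
  have himage : ContinuousMap.toFun '' {f : C(X, E) | LipschitzWith K f ∧ f x₀ = e} =
      {g : X → E | LipschitzWith K g ∧ g x₀ = e} := by
    ext g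
    refine ⟨?_, fun hg => ⟨⟨g, hg.1.continuous⟩, hg, rfl⟩⟩
    rintro ⟨f, hf, rfl⟩
    exact hf
  rw [himage]
  refine (isCompact_univ_pi fun x => isCompact_closedBall e (K * dist x x₀)).of_isClosed_subset
    ((isClosed_setOfPred_lipschitzWith K).inter
      (isClosed_eq (continuous_apply x₀) continuous_const)) fun g hg x _ => ?_
  rw [Metric.mem_closedBall, ← hg.2]
  exact hg.1.dist_le_mul x x₀

theorem LipschitzWith.IccExtend {E : Type*} [PseudoMetricSpace E] {a b : ℝ} (hab : a ≤ b)
    {f : Icc a b → E} {K : ℝ≥0} (hf : LipschitzWith K f) : LipschitzWith K (IccExtend hab f) :=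
  (hf.comp (LipschitzWith.projIcc hab)).weaken (mul_one K).le

section UnparameterisedPaths

variable {d : ℕ} {p a b r : ℝ}

theorem continuousOn_signatureT_IccExtend (hab : a ≤ b) (K : ℝ≥0) :
    ContinuousOn (fun f : C(Icc a b, Vec d) => signatureT (IccExtend hab f) a b)
      {f | LipschitzWith K f} := by
  intro f hf
  have hunif : TendstoUniformlyOn (fun g : C(Icc a b, Vec d) => IccExtend hab g)
      (IccExtend hab f) (𝓝[{f | LipschitzWith K f}] f) (Icc a b) :=
    ((ContinuousMap.tendsto_iff_tendstoUniformly.1 (tendsto_id.mono_left nhdsWithin_le_nhds)).comp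
      (projIcc a b hab)).tendstoUniformlyOn
  refine tendsto_pi_nhds.2 fun k => ((PiLp.continuous_toLp 2 _).tendsto _).comp
    (tendsto_pi_nhds.2 fun idx => ?_)
  exact (tendstoUniformlyOn_sigWord hunif (eventually_nhdsWithin_of_forall fun g hg =>
    (LipschitzWith.IccExtend hab hg).lipschitzOnWith) (hf.IccExtend hab).lipschitzOnWith
    _).tendsto_at ⟨hab, le_rfl⟩

def lipschitzPathsFromZero (d : ℕ) (hab : a ≤ b) (K : ℝ≥0) : Set C(Icc a b, Vec d) :=
  {f | LipschitzWith K f ∧ f ⟨a, left_mem_Icc.2 hab⟩ = 0}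

def PathsFrom0.ofLipschitz (hp : 1 ≤ p) {hab : a ≤ b} {K : ℝ≥0}
    (f : lipschitzPathsFromZero d hab K) : PathsFrom0 d p a b :=
  ⟨IccExtend hab f.1, (f.2.1.IccExtend hab).lipschitzOnWith.memCp hp,
    (IccExtend_left hab _).trans f.2.2⟩

theorem bddBelow_pvar_representatives (q : UPath d p a b) :
    BddBelow {L | ∃ x : PathsFrom0 d p a b,
      Quotient.mk (sigSetoid d p a b) x = q ∧ MemCp x.1 1 a b ∧ L = pvar x.1 1 a b} :=
  ⟨0, by rintro _ ⟨x, -, -, rfl⟩; exact pvar_one_nonneg _ _ _⟩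

theorem treeLength_le_pvar {q : UPath d p a b} {x : PathsFrom0 d p a b}
    (hxq : Quotient.mk (sigSetoid d p a b) x = q) (hx : MemCp x.1 1 a b) :
    treeLength d p a b q ≤ pvar x.1 1 a b :=
  csInf_le (bddBelow_pvar_representatives q) ⟨x, hxq, hx, rfl⟩

theorem exists_pvar_lt_of_treeLength_lt {q : UPath d p a b} {r' : ℝ}
    (hq : ∃ x : PathsFrom0 d p a b, Quotient.mk (sigSetoid d p a b) x = q ∧ MemCp x.1 1 a b)
    (h : treeLength d p a b q < r') :
    ∃ x : PathsFrom0 d p a b,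
      Quotient.mk (sigSetoid d p a b) x = q ∧ MemCp x.1 1 a b ∧ pvar x.1 1 a b < r' := by
  obtain ⟨x₀, hx₀q, hx₀⟩ := hq
  obtain ⟨_, ⟨x, hxq, hx, rfl⟩, hlt⟩ := (csInf_lt_iff (bddBelow_pvar_representatives q)
    ⟨_, x₀, hx₀q, hx₀, rfl⟩).1 h
  exact ⟨x, hxq, hx, hlt⟩

theorem exists_lipschitzPathsFromZero_signatureT_eq (hab : a ≤ b) {q : UPath d p a b}
    (hq : q ∈ ballB d p a b r) {r' : ℝ} (hr' : r < r') :
    ∃ f ∈ lipschitzPathsFromZero d hab (r' / (b - a)).toNNReal,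
      signatureT (IccExtend hab f) a b = sigQ d p a b q := by
  obtain ⟨y, rfl, hy, hyr⟩ := exists_pvar_lt_of_treeLength_lt hq.1 (hq.2.trans_lt hr')
  obtain ⟨z, hz, hz0, hzy⟩ :=
    exists_lipschitzOnWith_signatureT_eq hab hy.1 hy.boundedVariationOn
  have hK : (variationOnFromTo y.1 (Icc a b) a b / (b - a)).toNNReal ≤ (r' / (b - a)).toNNReal :=
    Real.toNNReal_le_toNNReal (div_le_div_of_nonneg_right
      ((hy.variationOnFromTo_le_pvar_one hab).trans hyr.le) (sub_nonneg.2 hab))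
  refine ⟨⟨(Icc a b).domRestrict z, hz.continuousOn.domRestrict⟩,
    ⟨(lipschitzOnWith_iff_restrict.1 hz).weaken hK, hz0.trans y.2.2⟩, ?_⟩
  rw [signatureT_congr hab fun t ht => IccExtend_of_mem hab _ ht]
  exact hzy

theorem Real.toNNReal_div_mul_le {s c : ℝ} (hs : 0 ≤ s) (hc : 0 ≤ c) :
    ((s / c).toNNReal : ℝ) * c ≤ s := by
  rw [Real.coe_toNNReal _ (div_nonneg hs hc)]
  rcases hc.eq_or_lt with rfl | hc
  · simpa using hs
  · rw [div_mul_cancel₀ _ hc.ne']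

/-- The tree-reduced length is an infimum which need not be attained, hence the intersection
over the lengths `r + 1 / (m + 1)`. -/
theorem sigQ_image_ballB (hp : 1 ≤ p) (hab : a ≤ b) (hr : 0 ≤ r) :
    sigQ d p a b '' ballB d p a b r =
      ⋂ m : ℕ, (fun f : C(Icc a b, Vec d) => signatureT (IccExtend hab f) a b) ''
        lipschitzPathsFromZero d hab ((r + 1 / (m + 1)) / (b - a)).toNNReal := by
  ext s
  constructor
  · rintro ⟨q, hq, rfl⟩
    exact mem_iInter.2 fun m =>
      exists_lipschitzPathsFromZero_signatureT_eq hab hq (lt_add_of_pos_right r (by positivity))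
  · intro hs
    choose f hf hfs using mem_iInter.1 hs
    set x : ℕ → PathsFrom0 d p a b := fun m => PathsFrom0.ofLipschitz hp ⟨f m, hf m⟩
    have hx : ∀ m, MemCp (x m).1 1 a b := fun m =>
      ((hf m).1.IccExtend hab).lipschitzOnWith.memCp le_rfl
    refine ⟨Quotient.mk _ (x 0), ⟨⟨x 0, rfl, hx 0⟩, le_of_forall_pos_lt_add fun ε hε => ?_⟩, hfs 0⟩
    obtain ⟨m, hm⟩ := exists_nat_one_div_lt hε
    calc treeLength d p a b (Quotient.mk _ (x 0))
        ≤ pvar (x m).1 1 a b :=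
          treeLength_le_pvar (Quotient.sound ((hfs m).trans (hfs 0).symm)) (hx m)
      _ ≤ r + 1 / (m + 1) := (((hf m).1.IccExtend hab).lipschitzOnWith.pvar_one_le hab).trans
          (Real.toNNReal_div_mul_le (by positivity) (sub_nonneg.2 hab))
      _ < r + ε := by linarith

theorem isCompact_ballB (hp : 1 ≤ p) (hab : a ≤ b) (hr : 0 ≤ r) :
    @IsCompact (UPath d p a b) (prodTop d p a b) (ballB d p a b r) := by
  let := prodTop d p a b
  have hK : ∀ K, IsCompact ((fun f : C(Icc a b, Vec d) => signatureT (IccExtend hab f) a b) ''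
      lipschitzPathsFromZero d hab K) := fun K =>
    (isCompact_setOf_lipschitzWith K _ 0).image_of_continuousOn
      ((continuousOn_signatureT_IccExtend hab K).mono fun f hf => hf.1)
  rw [(⟨rfl⟩ : IsInducing (sigQ d p a b)).isCompact_iff, sigQ_image_ballB hp hab hr]
  exact (hK _).of_isClosed_subset (isClosed_iInter fun m => (hK _).isClosed) (iInter_subset _ 0)

theorem iUnion_ballB_eq_univ : ⋃ n : ℕ, ballB d 1 a b (n + 1) = univ :=
  eq_univ_of_forall fun q => Quotient.inductionOn q fun x => mem_iUnion.2
    ⟨⌈pvar x.1 1 a b⌉₊, ⟨x, rfl, x.2.1⟩,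
      (treeLength_le_pvar rfl x.2.1).trans ((Nat.le_ceil _).trans (by linarith))⟩

end UnparameterisedPaths

theorem ballB_isCompact_and_sigmaCompact_general {d : ℕ} (p a b r : ℝ)
    (hp1 : 1 ≤ p) (hab : a ≤ b) (hr : 0 < r) :
    @IsCompact (UPath d p a b) (prodTop d p a b) (ballB d p a b r) ∧
      @SigmaCompactSpace (UPath d 1 a b) (prodTop d 1 a b) := by
  let := prodTop d 1 a b
  exact ⟨isCompact_ballB hp1 hab hr.le, ⟨⟨fun n => ballB d 1 a b (n + 1),
    fun n => isCompact_ballB le_rfl hab (by positivity), iUnion_ballB_eq_univ⟩⟩⟩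

/-- `B(r)` is compact; `𝒞_1` is σ-compact. For `1 ≤ p < 2` and `r > 0`,
the set `B(r)` of unparameterised paths of tree-reduced length at most `r` is compact in
the product topology `χ_pr`; consequently `(𝒞_1, χ_pr)` is σ-compact. -/
theorem ballB_isCompact_and_sigmaCompact {d : ℕ} (p a b r : ℝ)
    (hp1 : 1 ≤ p) (hp2 : p < 2) (hab : a ≤ b) (hr : 0 < r) :
    @IsCompact (UPath d p a b) (prodTop d p a b) (ballB d p a b r) ∧
      @SigmaCompactSpace (UPath d 1 a b) (prodTop d 1 a b) :=
  ballB_isCompact_and_sigmaCompact_general p a b r hp1 hab hr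

end
end

section
/- Let x ∈ C_1([a,b],V) and y ∈ C_1([c,d],V) be continuous bounded variation paths, and let φ : ℕ∪{0} → ℝ be a weight function such that both |φ| and |φ₊| satisfy the summability condition (Σ_k C^k |φ(k)|/(k!)² < ∞ for all C > 0), where φ₊(k) := φ(k+1). Then the two-parameter φ-signature kernel k_φ(x,y)_{s,t} := Σ_{k≥0} φ(k)⟨S(x)^{(k)}_{[a,s]}, S(y)^{(k)}_{[c,t]}⟩_{V^{⊗k}} satisfies the integral equation k_φ(x,y)_{s,t} = φ(0) + ∫_a^s ∫_c^t k_{φ₊}(x,y)_{u,v} ⟨dx_u, dy_v⟩_V for all s ∈ [a,b], t ∈ [c,d]. -/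
noncomputable section

open Filter Topology MeasureTheory

/-!
Expanding `k_{φ₊}(x,y)_{u,v}` over signature levels, the level-`k` part of the double
Riemann–Stieltjes sum factorises, by bilinearity of the Hilbert–Schmidt inner product and
`⟨v ⊗ e, w ⊗ f⟩ = ⟨v, w⟩ ⟨e, f⟩`, into
`⟨Σᵢ S(x)^{(k)}_{[a,uᵢ]} ⊗ Δxᵢ, Σⱼ S(y)^{(k)}_{[c,vⱼ]} ⊗ Δyⱼ⟩`, whose two factors are
Riemann–Stieltjes sums converging to the level-`(k+1)` signatures. Every coordinate of `x` is
controlled by the running `1`-variation `ω` of `x`, so iterated integrals of order `k` and their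
Riemann–Stieltjes sums are bounded by `ω^k / k!` uniformly in the mesh. Against the summability
condition on `φ` this factorial decay lets dominated convergence pass the limit through the sum
over levels; level `0` contributes `φ(0)`.
-/

section

open Finset
open scoped Nat

lemma succ_mul_pow_mul_sub_le {p q : ℝ} (hp : 0 ≤ p) (hpq : p ≤ q) (k : ℕ) :
    (k + 1) * p ^ k * (q - p) ≤ q ^ (k + 1) - p ^ (k + 1) := by
  induction k with
  | zero => simp
  | succ k ih =>
    have hq : 0 ≤ q := hp.trans hpq
    have h : 0 ≤ (k + 1) * p ^ k * (q - p) := by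
      have := sub_nonneg.2 hpq
      positivity
    calc ((k + 1 : ℕ) + 1 : ℝ) * p ^ (k + 1) * (q - p)
        = p * ((k + 1) * p ^ k * (q - p)) + p ^ (k + 1) * (q - p) := by push_cast; ring
      _ ≤ q * (q ^ (k + 1) - p ^ (k + 1)) + p ^ (k + 1) * (q - p) := by
        gcongr ?_ + _
        exact mul_le_mul hpq ih h hq
      _ = q ^ (k + 1 + 1) - p ^ (k + 1 + 1) := by ring

lemma sum_range_mul_eq_sum_sum {M : Type*} [AddCommMonoid M] (f : ℕ → M) (n m : ℕ) :
    ∑ k ∈ range (n * m), f k = ∑ i ∈ range n, ∑ r ∈ range m, f (i * m + r) := by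
  induction n with
  | zero => simp
  | succ n ih => rw [Nat.succ_mul, sum_range_add, ih, sum_range_succ]

lemma abs_sum_range_le_sub_of_abs_le {T H : ℕ → ℝ} {N : ℕ}
    (h : ∀ k < N, |T k| ≤ H (k + 1) - H k) : |∑ k ∈ range N, T k| ≤ H N - H 0 :=
  (abs_sum_le_sum_abs _ _).trans <|
    (sum_le_sum fun k hk => h k (mem_range.1 hk)).trans_eq (sum_range_sub H N)

def ControlledOn (ω g : ℝ → ℝ) (a b : ℝ) : Prop :=
  ∀ ⦃u v⦄, a ≤ u → u ≤ v → v ≤ b → |g v - g u| ≤ ω v - ω u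

lemma ControlledOn.le {ω g : ℝ → ℝ} {a b u v : ℝ} (h : ControlledOn ω g a b) (hau : a ≤ u)
    (huv : u ≤ v) (hvb : v ≤ b) : ω u ≤ ω v := by
  linarith [h hau huv hvb, abs_nonneg (g v - g u)]

lemma boundedVariationOn_of_bddAbove_varSums {E : Type*} [NormedAddCommGroup E] {x : ℝ → E}
    {a b : ℝ} (hx : BddAbove (varSums x 1 a b)) : BoundedVariationOn x (Set.Icc a b) := by
  obtain ⟨M, hM⟩ := hx
  refine ne_top_of_le_ne_top (ENNReal.ofReal_ne_top (r := M)) (iSup_le fun ⟨n, u, hu, hus⟩ => ?_)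
  -- pad `u` by `a` in front and `b` behind to get a partition of `[a,b]`
  set t : ℕ → ℝ := fun i => if i = 0 then a else if i ≤ n + 1 then u (i - 1) else b
  have ht : Monotone t := monotone_nat_of_le_succ fun i => by
    rcases i with _ | i
    · simp [t, (hus 0).1]
    · by_cases h : i + 1 ≤ n
      · simp [t, h, show i + 1 ≤ n + 1 by omega, hu (Nat.le_succ i)]
      · by_cases h' : i = n
        · simp [t, h', (hus n).2]
        · simp [t, show ¬ i + 1 ≤ n + 1 by omega, show ¬ i + 1 + 1 ≤ n + 1 by omega]
  have hmem : ∑ i ∈ range (n + 2), ‖x (t (i + 1)) - x (t i)‖ ^ (1 : ℝ) ∈ varSums x 1 a b :=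
    ⟨n + 2, t, ht, by simp [t], by simp [t], rfl⟩
  have hsub : ∑ i ∈ range n, ‖x (u (i + 1)) - x (u i)‖
      ≤ ∑ i ∈ range (n + 2), ‖x (t (i + 1)) - x (t i)‖ ^ (1 : ℝ) := by
    simp only [Real.rpow_one]
    rw [sum_range_succ', sum_range_succ]
    have hshift : ∀ i ∈ range n, ‖x (u (i + 1)) - x (u i)‖ = ‖x (t (i + 1 + 1)) - x (t (i + 1))‖ :=
      fun i hi => by
        have := mem_range.1 hi
        simp [t, show i + 1 ≤ n + 1 by omega, show i + 1 + 1 ≤ n + 1 by omega]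
    rw [sum_congr rfl hshift]
    linarith [norm_nonneg (x (t (n + 1 + 1)) - x (t (n + 1))),
      norm_nonneg (x (t (0 + 1)) - x (t 0))]
  simp only [edist_dist, dist_eq_norm]
  rw [← ENNReal.ofReal_sum_of_nonneg fun _ _ => norm_nonneg _]
  exact ENNReal.ofReal_le_ofReal (hsub.trans (hM hmem))

lemma controlledOn_variationOnFromTo {d : ℕ} {x : ℝ → Vec d} {a b : ℝ}
    (hx : BoundedVariationOn x (Set.Icc a b)) (i : Fin d) :
    ControlledOn (variationOnFromTo x (Set.Icc a b) a) (fun u => x u i) a b := by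
  intro u v hau huv hvb
  have ha : a ∈ Set.Icc a b := ⟨le_rfl, (hau.trans huv).trans hvb⟩
  have hu : u ∈ Set.Icc a b := ⟨hau, huv.trans hvb⟩
  have hv : v ∈ Set.Icc a b := ⟨hau.trans huv, hvb⟩
  rw [variationOnFromTo.sub_right hx.locallyBoundedVariationOn ha hv hu,
    variationOnFromTo.eq_of_le _ _ huv]
  calc |x v i - x u i| ≤ ‖x v - x u‖ := by simpa using PiLp.norm_apply_le (x v - x u) i
    _ = dist (x u) (x v) := by rw [dist_comm, dist_eq_norm]
    _ ≤ _ := (hx.mono Set.inter_subset_left).dist_le (s := Set.Icc a b ∩ Set.Icc u v)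
        ⟨hu, le_rfl, huv⟩ ⟨hv, huv, le_rfl⟩

-- For `n = 0` every point is `a`, since division by zero is `0`.
def node (a s : ℝ) (n i : ℕ) : ℝ := a + i * (s - a) / n

section Nodes

variable {a b s : ℝ} {n m i : ℕ}

lemma node_zero : node a s n 0 = a := by simp [node]

lemma node_mem_Icc (has : a ≤ s) (hi : i ≤ n) : node a s n i ∈ Set.Icc a s := by
  have hsa : 0 ≤ s - a := sub_nonneg.2 has
  have hle : i * (s - a) / n ≤ s - a := by
    rcases Nat.eq_zero_or_pos n with rfl | hn
    · simpa using hsa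
    · rw [div_le_iff₀ (by exact_mod_cast hn), mul_comm (s - a)]
      exact mul_le_mul_of_nonneg_right (by exact_mod_cast hi) hsa
  exact ⟨le_add_of_nonneg_right (by positivity), by simp only [node]; linarith⟩

lemma node_mem_Icc_of_mem (hs : s ∈ Set.Icc a b) (hi : i ≤ n) : node a s n i ∈ Set.Icc a b :=
  Set.Icc_subset_Icc_right hs.2 (node_mem_Icc hs.1 hi)

lemma node_monotone (has : a ≤ s) : Monotone (node a s n) := fun i j hij => by
  have : (i : ℝ) * (s - a) ≤ j * (s - a) :=
    mul_le_mul_of_nonneg_right (by exact_mod_cast hij) (sub_nonneg.2 has)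
  simp only [node]
  gcongr

lemma node_mul_right (hm : m ≠ 0) : node a s (n * m) (i * m) = node a s n i := by
  simp only [node, Nat.cast_mul]
  rw [mul_comm (i : ℝ), mul_assoc, mul_comm (n : ℝ), mul_div_mul_left _ _ (by exact_mod_cast hm)]

lemma abs_node_div_mul_sub_node_le (has : a ≤ s) (hm : m ≠ 0) (k : ℕ) :
    |node a s (n * m) (k / m * m) - node a s (n * m) k| ≤ (s - a) / n := by
  have hk : (k : ℝ) = (k / m * m : ℕ) + (k % m : ℕ) := by
    exact_mod_cast (Nat.div_add_mod' k m).symm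
  have hdiff : node a s (n * m) k - node a s (n * m) (k / m * m) =
      (k % m : ℕ) / m * ((s - a) / n) := by
    rcases eq_or_ne n 0 with rfl | hn
    · simp [node]
    · simp only [node]
      rw [hk]
      push_cast
      field_simp
      ring
  have hmod : ((k % m : ℕ) : ℝ) / m ≤ 1 :=
    div_le_one_of_le₀ (by exact_mod_cast (Nat.mod_lt k (Nat.pos_of_ne_zero hm)).le) (by positivity)
  have hsa : 0 ≤ (s - a) / n := div_nonneg (sub_nonneg.2 has) n.cast_nonneg
  rw [abs_sub_comm, hdiff, abs_of_nonneg (by positivity)]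
  exact mul_le_of_le_one_left hsa hmod

end Nodes

section RiemannStieltjes

variable {f g ω : ℝ → ℝ} {a b s : ℝ}

lemma rsSum_eq_sum_node (n : ℕ) : rsSum f g a s n =
    ∑ i ∈ range n, f (node a s n i) * (g (node a s n (i + 1)) - g (node a s n i)) := by
  simp [rsSum, node]

lemma sum_blocks_eq_sum_range_mul (f g : ℝ → ℝ) (u : ℕ → ℝ) (n m : ℕ) :
    ∑ i ∈ range n, f (u (i * m)) * (g (u ((i + 1) * m)) - g (u (i * m))) =
      ∑ k ∈ range (n * m), f (u (k / m * m)) * (g (u (k + 1)) - g (u k)) := by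
  rw [sum_range_mul_eq_sum_sum]
  refine sum_congr rfl fun i _ => ?_
  have hblock : ∀ r ∈ range m, (i * m + r) / m * m = i * m := fun r hr => by
    rw [Nat.add_comm, Nat.add_mul_div_right _ _ (by have := mem_range.1 hr; omega),
      Nat.div_eq_of_lt (mem_range.1 hr), Nat.zero_add]
  have htel := sum_range_sub (fun r => g (u (i * m + r))) m
  simp only [← add_assoc, add_zero] at htel
  rw [sum_congr rfl fun r hr => by rw [hblock r hr], ← mul_sum, htel, Nat.succ_mul]

lemma abs_rsSum_sub_rsSum_mul_le (hg : ControlledOn ω g a b) (hs : s ∈ Set.Icc a b) {n m : ℕ}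
    (hm : m ≠ 0) {ε : ℝ} (hε : 0 ≤ ε)
    (hf : ∀ u ∈ Set.Icc a b, ∀ v ∈ Set.Icc a b, |u - v| ≤ (s - a) / n → |f u - f v| ≤ ε) :
    |rsSum f g a s n - rsSum f g a s (n * m)| ≤ ε * (ω s - ω a) := by
  have hcoarse : rsSum f g a s n = ∑ i ∈ range n,
      f (node a s (n * m) (i * m)) *
        (g (node a s (n * m) ((i + 1) * m)) - g (node a s (n * m) (i * m))) := by
    simp only [rsSum_eq_sum_node, node_mul_right hm]
  rw [hcoarse, sum_blocks_eq_sum_range_mul, rsSum_eq_sum_node, ← sum_sub_distrib]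
  set u := node a s (n * m)
  have hu : ∀ k ≤ n * m, u k ∈ Set.Icc a b := fun k hk => node_mem_Icc_of_mem hs hk
  calc _ ≤ ε * ω (u (n * m)) - ε * ω (u 0) :=
        abs_sum_range_le_sub_of_abs_le (H := fun k => ε * ω (u k)) fun k hk => ?_
    _ ≤ ε * (ω s - ω a) := by
      have hend := hu (n * m) le_rfl
      rw [show u 0 = a from node_zero, ← mul_sub]
      exact mul_le_mul_of_nonneg_left (by linarith [hg.le hend.1 (node_mem_Icc hs.1 le_rfl).2 hs.2])
        hε
  have huk := hu k hk.le
  have huk1 := hu (k + 1) hk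
  have hf' : |f (u (k / m * m)) - f (u k)| ≤ ε :=
    hf _ (hu _ ((Nat.div_mul_le_self k m).trans hk.le)) _ huk
      (abs_node_div_mul_sub_node_le hs.1 hm k)
  rw [← sub_mul, abs_mul, ← mul_sub]
  exact mul_le_mul hf' (hg huk.1 (node_monotone hs.1 (Nat.le_succ k)) huk1.2) (abs_nonneg _) hε

lemma uniformCauchySeqOn_rsSum (hf : ContinuousOn f (Set.Icc a b)) (hg : ControlledOn ω g a b) :
    UniformCauchySeqOn (fun n s => rsSum f g a s n) atTop (Set.Icc a b) := by
  rw [Metric.uniformCauchySeqOn_iff]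
  intro ε hε
  set W := |ω b - ω a| + 1
  have hW : 0 < W := by positivity
  obtain ⟨δ, hδ, hfδ⟩ := Metric.uniformContinuousOn_iff_le.1
    (isCompact_Icc.uniformContinuousOn_of_continuous hf) (ε / (2 * W)) (by positivity)
  obtain ⟨N, hN⟩ := eventually_atTop.1
    ((tendsto_order.1 (tendsto_const_div_atTop_nhds_zero_nat (b - a))).2 δ hδ)
  refine ⟨N + 1, fun p hp q hq s hs => ?_⟩
  have hmesh : ∀ n ≥ N, ∀ u ∈ Set.Icc a b, ∀ v ∈ Set.Icc a b,
      |u - v| ≤ (s - a) / n → |f u - f v| ≤ ε / (2 * W) := fun n hn u hu v hv huv => by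
    have hsb : (s - a) / n ≤ (b - a) / n := by gcongr; exact hs.2
    simpa [Real.dist_eq] using hfδ u hu v hv (by rw [Real.dist_eq]; linarith [hN n hn])
  -- compare both sums with the one over the common refinement into `p * q` pieces
  have hp' := abs_rsSum_sub_rsSum_mul_le hg hs (m := q) (by omega) (by positivity)
    (hmesh p (by omega))
  have hq' := abs_rsSum_sub_rsSum_mul_le hg hs (m := p) (by omega) (by positivity)
    (hmesh q (by omega))
  rw [Nat.mul_comm q p] at hq'
  have hωs : ω s - ω a ≤ W - 1 := by
    simp only [W]
    linarith [hg.le hs.1 hs.2 le_rfl, le_abs_self (ω b - ω a)]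
  have hbound : ε / (2 * W) * (ω s - ω a) < ε / 2 := by
    calc ε / (2 * W) * (ω s - ω a) ≤ ε / (2 * W) * (W - 1) := by gcongr
      _ < ε / (2 * W) * W := by gcongr; linarith
      _ = ε / 2 := by field_simp
  rw [Real.dist_eq]
  linarith [abs_sub_le (rsSum f g a s p) (rsSum f g a s (p * q)) (rsSum f g a s q),
    abs_sub_comm (rsSum f g a s (p * q)) (rsSum f g a s q)]

lemma tendsto_rsSum_rsInt (hf : ContinuousOn f (Set.Icc a b)) (hg : ControlledOn ω g a b)
    (hs : s ∈ Set.Icc a b) : Tendsto (rsSum f g a s) atTop (𝓝 (rsInt f g a s)) :=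
  ((uniformCauchySeqOn_rsSum hf hg).cauchySeq hs).tendsto_limUnder

lemma continuousOn_rsSum (hf : ContinuousOn f (Set.Icc a b)) (hg : ContinuousOn g (Set.Icc a b))
    (n : ℕ) : ContinuousOn (fun s => rsSum f g a s n) (Set.Icc a b) := by
  simp only [rsSum_eq_sum_node]
  have hnode : ∀ i ≤ n, ContinuousOn (fun s => node a s n i) (Set.Icc a b) ∧
      Set.MapsTo (fun s => node a s n i) (Set.Icc a b) (Set.Icc a b) := fun i hi =>
    ⟨by unfold node; fun_prop, fun s hs => node_mem_Icc_of_mem hs hi⟩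
  refine continuousOn_finsetSum _ fun i hi => ?_
  obtain ⟨hc, hm⟩ := hnode i (mem_range.1 hi).le
  obtain ⟨hc', hm'⟩ := hnode (i + 1) (mem_range.1 hi)
  exact (hf.comp hc hm).mul ((hg.comp hc' hm').sub (hg.comp hc hm))

lemma continuousOn_rsInt (hf : ContinuousOn f (Set.Icc a b)) (hgc : ContinuousOn g (Set.Icc a b))
    (hg : ControlledOn ω g a b) : ContinuousOn (fun s => rsInt f g a s) (Set.Icc a b) :=
  ((uniformCauchySeqOn_rsSum hf hg).tendstoUniformlyOn_of_tendsto
    fun _ hs => tendsto_rsSum_rsInt hf hg hs).continuousOn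
    (Eventually.of_forall (continuousOn_rsSum hf hgc)).frequently

lemma abs_rsSum_le_pow_div_factorial (hg : ControlledOn ω g a b) (hω : 0 ≤ ω a) {k : ℕ}
    (hf : ∀ u ∈ Set.Icc a b, |f u| ≤ ω u ^ k / k !) (hs : s ∈ Set.Icc a b) (n : ℕ) :
    |rsSum f g a s n| ≤ ω s ^ (k + 1) / (k + 1)! := by
  set u := node a s n
  have hu : ∀ i ≤ n, u i ∈ Set.Icc a b := fun i hi => node_mem_Icc_of_mem hs hi
  have hω' : ∀ v ∈ Set.Icc a b, 0 ≤ ω v := fun v hv => hω.trans (hg.le le_rfl hv.1 hv.2)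
  rw [rsSum_eq_sum_node]
  calc _ ≤ ω (u n) ^ (k + 1) / (k + 1)! - ω (u 0) ^ (k + 1) / (k + 1)! :=
        abs_sum_range_le_sub_of_abs_le (H := fun i => ω (u i) ^ (k + 1) / (k + 1)!)
          fun i hi => ?_
    _ ≤ ω s ^ (k + 1) / (k + 1)! := by
      have hun := hu n le_rfl
      have hpow : ω (u n) ^ (k + 1) ≤ ω s ^ (k + 1) :=
        pow_le_pow_left₀ (hω' _ hun) (hg.le hun.1 (node_mem_Icc hs.1 le_rfl).2 hs.2) _
      rw [show u 0 = a from node_zero, ← sub_div]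
      gcongr
      linarith [pow_nonneg hω (k + 1)]
  have hui := hu i hi.le
  have hui1 := hu (i + 1) hi
  have hle : u i ≤ u (i + 1) := node_monotone hs.1 (Nat.le_succ i)
  have h0 := hω' _ hui
  rw [abs_mul, ← sub_div]
  calc |f (u i)| * |g (u (i + 1)) - g (u i)| ≤ ω (u i) ^ k / k ! * (ω (u (i + 1)) - ω (u i)) :=
        mul_le_mul (hf _ hui) (hg hui.1 hle hui1.2) (abs_nonneg _) (by positivity)
    _ = (k + 1) * ω (u i) ^ k * (ω (u (i + 1)) - ω (u i)) / (k + 1)! := by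
        rw [Nat.factorial_succ]; push_cast; field_simp
    _ ≤ _ := by gcongr; exact succ_mul_pow_mul_sub_le h0 (hg.le hui.1 hle hui1.2) k

end RiemannStieltjes

structure IsControlledPath {d : ℕ} (x : ℝ → Vec d) (ω : ℝ → ℝ) (a b : ℝ) : Prop where
  continuousOn : ContinuousOn x (Set.Icc a b)
  controlledOn : ∀ i, ControlledOn ω (fun u => x u i) a b
  nonneg : 0 ≤ ω a

lemma MemCp.isControlledPath {d : ℕ} {x : ℝ → Vec d} {a b : ℝ} (hx : MemCp x 1 a b) :
    IsControlledPath x (variationOnFromTo x (Set.Icc a b) a) a b where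
  continuousOn := hx.1
  controlledOn := controlledOn_variationOnFromTo (boundedVariationOn_of_bddAbove_varSums hx.2)
  nonneg := (variationOnFromTo.self _ _ _).ge

namespace IsControlledPath

variable {d : ℕ} {x : ℝ → Vec d} {ω : ℝ → ℝ} {a b s : ℝ} (hx : IsControlledPath x ω a b)
include hx

lemma continuousOn_coord (i : Fin d) : ContinuousOn (fun u => x u i) (Set.Icc a b) :=
  (PiLp.continuous_apply 2 _ i).comp_continuousOn hx.continuousOn

lemma continuousOn_sigWord (w : List (Fin d)) : ContinuousOn (sigWord x a w) (Set.Icc a b) := by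
  induction w with
  | nil => exact continuousOn_const
  | cons i w ih => exact continuousOn_rsInt ih (hx.continuousOn_coord i) (hx.controlledOn i)

lemma tendsto_rsSum_sigWord (w : List (Fin d)) (i : Fin d) (hs : s ∈ Set.Icc a b) :
    Tendsto (rsSum (sigWord x a w) (fun u => x u i) a s) atTop (𝓝 (sigWord x a (i :: w) s)) :=
  tendsto_rsSum_rsInt (hx.continuousOn_sigWord w) (hx.controlledOn i) hs

lemma abs_sigWord_le (w : List (Fin d)) :
    ∀ s ∈ Set.Icc a b, |sigWord x a w s| ≤ ω s ^ w.length / w.length ! := by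
  induction w with
  | nil => intro s _; simp [sigWord]
  | cons i w ih =>
    intro s hs
    exact le_of_tendsto (hx.tendsto_rsSum_sigWord w i hs).abs <| Eventually.of_forall
      (abs_rsSum_le_pow_div_factorial (hx.controlledOn i) hx.nonneg ih hs)

lemma abs_rsSum_sigWord_le (w : List (Fin d)) (i : Fin d) (hs : s ∈ Set.Icc a b) (n : ℕ) :
    |rsSum (sigWord x a w) (fun u => x u i) a s n| ≤ ω s ^ (w.length + 1) / (w.length + 1)! :=
  abs_rsSum_le_pow_div_factorial (hx.controlledOn i) hx.nonneg (hx.abs_sigWord_le w) hs n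

end IsControlledPath

section TensorLevels

variable {d : ℕ}

-- `v ⊗ e`, with `e` in the last tensor slot.
def tensorVec {k : ℕ} (v : TLevel d k) (e : Vec d) : TLevel d (k + 1) :=
  WithLp.toLp 2 fun idx => v (Fin.init idx) * e (idx (Fin.last k))

lemma inner_tensorVec {k : ℕ} (v w : TLevel d k) (e f : Vec d) :
    inner ℝ (tensorVec v e) (tensorVec w f) = inner ℝ v w * inner ℝ e f := by
  simp only [tensorVec, PiLp.inner_apply, RCLike.inner_apply, conj_trivial]
  rw [← (Fin.snocEquiv fun _ => Fin d).sum_comp, Fintype.sum_prod_type, sum_mul_sum, sum_comm]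
  refine sum_congr rfl fun idx _ => sum_congr rfl fun α _ => ?_
  simp only [show ∀ p : Fin d × (Fin k → Fin d), (Fin.snocEquiv fun _ => Fin d) p = Fin.snoc p.2 p.1
    from fun _ => rfl, Fin.init_snoc, Fin.snoc_last]
  ring

lemma abs_inner_le_card_mul {ι : Type*} [Fintype ι] {v w : EuclideanSpace ℝ ι} {A B : ℝ}
    (hv : ∀ i, |v i| ≤ A) (hw : ∀ i, |w i| ≤ B) :
    |inner ℝ v w| ≤ Fintype.card ι * (A * B) := by
  rw [PiLp.inner_apply, ← nsmul_eq_mul, ← card_univ]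
  refine (abs_sum_le_sum_abs _ _).trans (sum_le_card_nsmul _ _ _ fun i _ => ?_)
  rw [RCLike.inner_apply, conj_trivial, abs_mul, mul_comm]
  exact mul_le_mul (hv i) (hw i) (abs_nonneg _) ((abs_nonneg _).trans (hv i))

lemma abs_inner_le_pow_div_factorial_sq {k : ℕ} {v w : TLevel d k} {p q : ℝ}
    (hv : ∀ idx, |v idx| ≤ p ^ k / k !) (hw : ∀ idx, |w idx| ≤ q ^ k / k !) :
    |inner ℝ v w| ≤ (d * p * q) ^ k / (k ! : ℝ) ^ 2 := by
  refine (abs_inner_le_card_mul hv hw).trans_eq ?_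
  rw [Fintype.card_fun, Fintype.card_fin, Fintype.card_fin]
  push_cast
  ring

lemma inner_sigLevel_zero (x y : ℝ → Vec d) (a c s t : ℝ) :
    inner ℝ (sigLevel x a s 0) (sigLevel y c t 0) = 1 := by
  rw [PiLp.inner_apply]
  simp [sigLevel, sigWord]

lemma sigLevel_succ_apply (x : ℝ → Vec d) (a s : ℝ) {k : ℕ} (idx : Fin (k + 1) → Fin d) :
    sigLevel x a s (k + 1) idx =
      sigWord x a (idx (Fin.last k) :: (List.ofFn (Fin.init idx)).reverse) s := by
  simp only [sigLevel, List.ofFn_succ', List.concat_eq_append, List.reverse_concat]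
  rfl

-- Riemann–Stieltjes sum for `S(x)^{(k+1)}_{[a,s]} = ∫_a^s S(x)^{(k)}_{[a,u]} ⊗ dx_u`.
def rsSigLevel (x : ℝ → Vec d) (a s : ℝ) (k n : ℕ) : TLevel d (k + 1) :=
  ∑ i ∈ range n,
    tensorVec (sigLevel x a (node a s n i) k) (x (node a s n (i + 1)) - x (node a s n i))

lemma rsSigLevel_apply (x : ℝ → Vec d) (a s : ℝ) {k : ℕ} (n : ℕ) (idx : Fin (k + 1) → Fin d) :
    rsSigLevel x a s k n idx =
      rsSum (sigWord x a (List.ofFn (Fin.init idx)).reverse) (fun u => x u (idx (Fin.last k)))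
        a s n := by
  simp [rsSigLevel, tensorVec, rsSum_eq_sum_node, sigLevel]

end TensorLevels

namespace IsControlledPath

variable {d : ℕ} {x : ℝ → Vec d} {ω : ℝ → ℝ} {a b s : ℝ} (hx : IsControlledPath x ω a b)
include hx

lemma abs_sigLevel_apply_le (hs : s ∈ Set.Icc a b) (k : ℕ) (idx : Fin k → Fin d) :
    |sigLevel x a s k idx| ≤ ω s ^ k / k ! := by
  have h := hx.abs_sigWord_le (List.ofFn idx).reverse s hs
  rwa [List.length_reverse, List.length_ofFn] at h

lemma abs_rsSigLevel_apply_le (hs : s ∈ Set.Icc a b) (k n : ℕ) (idx : Fin (k + 1) → Fin d) :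
    |rsSigLevel x a s k n idx| ≤ ω s ^ (k + 1) / (k + 1)! := by
  simpa [rsSigLevel_apply] using
    hx.abs_rsSum_sigWord_le (List.ofFn (Fin.init idx)).reverse (idx (Fin.last k)) hs n

lemma tendsto_rsSigLevel (hs : s ∈ Set.Icc a b) (k : ℕ) :
    Tendsto (rsSigLevel x a s k) atTop (𝓝 (sigLevel x a s (k + 1))) := by
  have h : Tendsto (fun n => WithLp.toLp 2 fun idx => rsSigLevel x a s k n idx) atTop
      (𝓝 (WithLp.toLp 2 fun idx => sigLevel x a s (k + 1) idx)) :=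
    ((PiLp.continuous_toLp 2 _).tendsto _).comp <| tendsto_pi_nhds.2 fun idx => by
      simpa only [rsSigLevel_apply, sigLevel_succ_apply] using hx.tendsto_rsSum_sigWord _ _ hs
  simpa using h

end IsControlledPath

section Kernel

variable {d : ℕ}

lemma norm_mul_le_of_abs_le_pow_div_sq {c z B C : ℝ} (hBC : |B| ≤ C) {j : ℕ}
    (hz : |z| ≤ B ^ j / (j ! : ℝ) ^ 2) : ‖c * z‖ ≤ C ^ j * |c| / (j ! : ℝ) ^ 2 := by
  have hB : B ^ j ≤ C ^ j :=
    (le_abs_self _).trans ((abs_pow B j).trans_le (pow_le_pow_left₀ (abs_nonneg B) hBC j))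
  calc ‖c * z‖ = |c| * |z| := by rw [Real.norm_eq_abs, abs_mul]
    _ ≤ |c| * (C ^ j / (j ! : ℝ) ^ 2) := by gcongr; exact hz.trans (by gcongr)
    _ = C ^ j * |c| / (j ! : ℝ) ^ 2 := by ring

lemma summable_mul_of_abs_le {ψ : ℕ → ℝ}
    (hψ : ∀ C : ℝ, 0 < C → Summable fun k => C ^ k * |ψ k| / (k ! : ℝ) ^ 2) {z : ℕ → ℝ} {B : ℝ}
    (hz : ∀ k, |z k| ≤ B ^ k / (k ! : ℝ) ^ 2) : Summable fun k => ψ k * z k :=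
  (hψ (|B| + 1) (by positivity)).of_norm_bounded fun k =>
    norm_mul_le_of_abs_le_pow_div_sq (le_add_of_nonneg_right zero_le_one) (hz k)

lemma summable_mul_inner_sigLevel {ψ : ℕ → ℝ}
    (hψ : ∀ C : ℝ, 0 < C → Summable fun k => C ^ k * |ψ k| / (k ! : ℝ) ^ 2)
    {x y : ℝ → Vec d} {ωx ωy : ℝ → ℝ} {a b c e u v : ℝ} (hx : IsControlledPath x ωx a b)
    (hy : IsControlledPath y ωy c e) (hu : u ∈ Set.Icc a b) (hv : v ∈ Set.Icc c e) :
    Summable fun k => ψ k * inner ℝ (sigLevel x a u k) (sigLevel y c v k) :=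
  summable_mul_of_abs_le hψ fun k =>
    abs_inner_le_pow_div_factorial_sq (hx.abs_sigLevel_apply_le hu k)
      (hy.abs_sigLevel_apply_le hv k)

lemma kPath_eq_add_tsum {ψ : ℕ → ℝ} {x y : ℝ → Vec d} {a c s t : ℝ}
    (hsum : Summable fun k => ψ k * inner ℝ (sigLevel x a s k) (sigLevel y c t k)) :
    kPath d ψ x y a c s t =
      ψ 0 + ∑' k, ψ (k + 1) * inner ℝ (sigLevel x a s (k + 1)) (sigLevel y c t (k + 1)) := by
  rw [kPath, hsum.tsum_eq_zero_add, inner_sigLevel_zero, mul_one]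

lemma rsSum2_kPath_eq_tsum {ψ : ℕ → ℝ} {x y : ℝ → Vec d} {a c s t : ℝ} {n : ℕ}
    (hsum : ∀ i < n, ∀ j < n, Summable fun k =>
      ψ k * inner ℝ (sigLevel x a (node a s n i) k) (sigLevel y c (node c t n j) k)) :
    rsSum2 (fun u v => kPath d ψ x y a c u v) x y a s c t n =
      ∑' k, ψ k * inner ℝ (rsSigLevel x a s k n) (rsSigLevel y c t k n) := by
  have hrs2 : rsSum2 (fun u v => kPath d ψ x y a c u v) x y a s c t n =
      ∑ i ∈ range n, ∑ j ∈ range n, kPath d ψ x y a c (node a s n i) (node c t n j) *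
        inner ℝ (x (node a s n (i + 1)) - x (node a s n i))
          (y (node c t n (j + 1)) - y (node c t n j)) := by
    simp [rsSum2, node]
  rw [hrs2]
  simp_rw [rsSigLevel, sum_inner, inner_sum, inner_tensorVec, mul_sum]
  have hsum' : ∀ i ∈ range n, ∀ j ∈ range n, Summable fun k =>
      ψ k * (inner ℝ (sigLevel x a (node a s n i) k) (sigLevel y c (node c t n j) k) *
        inner ℝ (x (node a s n (i + 1)) - x (node a s n i))
          (y (node c t n (j + 1)) - y (node c t n j))) := fun i hi j hj =>
    ((hsum i (mem_range.1 hi) j (mem_range.1 hj)).mul_right _).congr fun k => by ring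
  rw [Summable.tsum_finsetSum fun i hi => summable_sum fun j hj => hsum' i hi j hj]
  refine sum_congr rfl fun i hi => ?_
  rw [Summable.tsum_finsetSum fun j hj => hsum' i hi j hj]
  refine sum_congr rfl fun j _ => ?_
  rw [kPath, ← tsum_mul_right]
  exact tsum_congr fun k => by ring

end Kernel

end

theorem weighted_signature_kernel_integral_equation_general {d : ℕ} (φ : ℕ → ℝ)
    (hφ : ∀ C : ℝ, 0 < C →
      Summable (fun k => C ^ k * |φ k| / (Nat.factorial k : ℝ) ^ 2))
    (hφp : ∀ C : ℝ, 0 < C →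
      Summable (fun k => C ^ k * |φ (k + 1)| / (Nat.factorial k : ℝ) ^ 2))
    (a b c e : ℝ)
    (x y : ℝ → Vec d) (hx : MemCp x 1 a b) (hy : MemCp y 1 c e) :
    ∀ s ∈ Set.Icc a b, ∀ t ∈ Set.Icc c e,
      Tendsto
        (fun n => rsSum2 (fun u v => kPath d (fun k => φ (k + 1)) x y a c u v) x y a s c t n)
        atTop (𝓝 (kPath d φ x y a c s t - φ 0)) := by
  intro s hs t ht
  have hX := hx.isControlledPath
  have hY := hy.isControlledPath
  have hsums : ∀ n, rsSum2 (fun u v => kPath d (fun k => φ (k + 1)) x y a c u v) x y a s c t n =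
      ∑' k, φ (k + 1) * inner ℝ (rsSigLevel x a s k n) (rsSigLevel y c t k n) := fun n =>
    rsSum2_kPath_eq_tsum fun i hi j hj => summable_mul_inner_sigLevel hφp hX hY
      (node_mem_Icc_of_mem hs hi.le) (node_mem_Icc_of_mem ht hj.le)
  rw [funext hsums, kPath_eq_add_tsum (summable_mul_inner_sigLevel hφ hX hY hs ht),
    add_sub_cancel_left]
  set B := d * variationOnFromTo x (Set.Icc a b) a s * variationOnFromTo y (Set.Icc c e) c t
  refine tendsto_tsum_of_dominated_convergence
    ((summable_nat_add_iff 1).2 (hφ (|B| + 1) (by positivity)))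
    (fun k => ((hX.tendsto_rsSigLevel hs k).inner (hY.tendsto_rsSigLevel ht k)).const_mul _)
    (Eventually.of_forall fun n k => ?_)
  exact norm_mul_le_of_abs_le_pow_div_sq (le_add_of_nonneg_right zero_le_one)
    (abs_inner_le_pow_div_factorial_sq (hX.abs_rsSigLevel_apply_le hs k n)
      (hY.abs_rsSigLevel_apply_le ht k n))

/-- Integral equation for the weighted signature kernel. For bounded
variation paths `x ∈ C_1([a,b],V)`, `y ∈ C_1([c,e],V)` and a real weight `φ` with `|φ|`
and `|φ₊|` satisfying the summability condition (`φ₊(k) = φ(k+1)`), the two-parameter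
`φ`-signature kernel satisfies
`k_φ(x,y)_{s,t} = φ(0) + ∫_a^s ∫_c^t k_{φ₊}(x,y)_{u,v} ⟨dx_u, dy_v⟩`, the double integral
being the limit of its Riemann–Stieltjes sums. -/
theorem weighted_signature_kernel_integral_equation {d : ℕ} (φ : ℕ → ℝ)
    (hφ : ∀ C : ℝ, 0 < C →
      Summable (fun k => C ^ k * |φ k| / (Nat.factorial k : ℝ) ^ 2))
    (hφp : ∀ C : ℝ, 0 < C →
      Summable (fun k => C ^ k * |φ (k + 1)| / (Nat.factorial k : ℝ) ^ 2))
    (a b c e : ℝ) (hab : a ≤ b) (hce : c ≤ e)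
    (x y : ℝ → Vec d) (hx : MemCp x 1 a b) (hy : MemCp y 1 c e) :
    ∀ s ∈ Set.Icc a b, ∀ t ∈ Set.Icc c e,
      Tendsto
        (fun n => rsSum2 (fun u v => kPath d (fun k => φ (k + 1)) x y a c u v) x y a s c t n)
        atTop (𝓝 (kPath d φ x y a c s t - φ 0)) :=
  weighted_signature_kernel_integral_equation_general φ hφ hφp a b c e x y hx hy
end
end
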